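/- arXiv:1003.5419 — 9 statements merged into one kernel-verified Lean document; each statement's English description precedes it below -/
import Mathlib

section
/- Let C ⊆ L⁰₊ be convex and let g ∈ C be strictly positive on C. Then g is a numéraire of C if and only if there exists a σ-finite measure μ on (Ω,F), equivalent to P, such that ∫ g dμ = sup_{f∈C} ∫ f dμ < ∞. -/
/-! If `dQ = ρ dμ` with `ρ = g` on `{g > 0}`, then `E_Q[(f/g)·1_{g>0}] = ∫_{g>0} f dμ` for every
`f`, and in particular `Q[g > 0] = ∫ g dμ`; so the numéraire inequality for `Q` is the
supporting inequality `∫ f dμ ≤ ∫ g dμ` for `μ`, up to the mass of `f` off `{g > 0}`.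
Strict positivity of `g` removes that mass, since every `f ∈ C` vanishes a.s. where `g = 0`.
Given `Q`, take `μ := (1/ρ) Q` with `ρ := 1` off `{g > 0}`; it is σ-finite because `ρ`
is positive. Given `μ`, σ-finiteness provides a positive `μ`-integrable `ρ` off `{g > 0}`, so that
`ρ μ` is finite and can be normalized to `Q`. -/

open MeasureTheory Filter Set

noncomputable section

variable {Ω : Type*} [MeasurableSpace Ω]

/-- The nonnegative orthant `L⁰₊` of `L⁰`: (a.e. classes of) random variables that are
a.e. nonnegative.  We work with representatives, requiring a.e.-measurability. -/
def L0plus (P : Measure Ω) : Set (Ω → ℝ) :=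
  {f | AEMeasurable f P ∧ 0 ≤ᵐ[P] f}

/-- A set `A ⊆ L⁰₊` is bounded (in probability) if `lim_{ℓ→∞} sup_{f∈A} P[f>ℓ] = 0`. -/
def BoundedInProb (P : Measure Ω) (A : Set (Ω → ℝ)) : Prop :=
  Tendsto (fun ℓ : ℝ => ⨆ f ∈ A, P {ω | ℓ < f ω}) atTop (nhds 0)

/-- A set `K` is closed in probability: it contains every (a.e.-measurable) limit in
measure of sequences from `K`.  (Convergence in probability is metrizable, so sequential
closedness is closedness.) -/
def ClosedInProb (P : Measure Ω) (K : Set (Ω → ℝ)) : Prop :=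
  ∀ (f : ℕ → Ω → ℝ) (g : Ω → ℝ), (∀ n, f n ∈ K) → AEMeasurable g P →
    TendstoInMeasure P f atTop g → g ∈ K

/-- `g` is strictly positive on `C`: `P[f > 0, g = 0] = 0` for every `f ∈ C`. -/
def StrictlyPositiveOn (P : Measure Ω) (C : Set (Ω → ℝ)) (g : Ω → ℝ) : Prop :=
  ∀ f ∈ C, P ({ω | 0 < f ω} ∩ {ω | g ω = 0}) = 0

/-- `Q` is a probability measure equivalent to `P`. -/
def EquivProb (P Q : Measure Ω) : Prop :=
  IsProbabilityMeasure Q ∧ Q ≪ P ∧ P ≪ Q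

/-- `g` is a numéraire of `C`: it is strictly positive on `C` and there is an equivalent
probability `Q` with `E_Q[(f/g)·1_{g>0}] ≤ Q[g>0]` for all `f ∈ C`. -/
def IsNumeraire (P : Measure Ω) (C : Set (Ω → ℝ)) (g : Ω → ℝ) : Prop :=
  StrictlyPositiveOn P C g ∧
    ∃ Q : Measure Ω, EquivProb P Q ∧
      ∀ f ∈ C, (∫⁻ ω in {ω | 0 < g ω}, ENNReal.ofReal (f ω / g ω) ∂Q) ≤ Q {ω | 0 < g ω}

/-- The class `CS_g(C)` of subsets `K` of `L⁰₊` with (CS1) `C ⊆ K`, (CS2) `K` convex and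
closed in probability, (CS3) `f ∈ K`, `δ ≥ 0`, `(1+δ)f − δg ∈ L⁰₊` imply `(1+δ)f − δg ∈ K`. -/
def CSclass (P : Measure Ω) (C : Set (Ω → ℝ)) (g : Ω → ℝ) : Set (Set (Ω → ℝ)) :=
  {K | K ⊆ L0plus P ∧ C ⊆ K ∧ Convex ℝ K ∧ ClosedInProb P K ∧
    ∀ f ∈ K, ∀ δ : ℝ, 0 ≤ δ →
      (fun ω => (1 + δ) * f ω - δ * g ω) ∈ L0plus P →
      (fun ω => (1 + δ) * f ω - δ * g ω) ∈ K}

/-- `cs_g(C)`, the smallest element of `CS_g(C)`. -/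
def csSet (P : Measure Ω) (C : Set (Ω → ℝ)) (g : Ω → ℝ) : Set (Ω → ℝ) :=
  ⋂ K ∈ CSclass P C g, K

/-- The solid hull of `K` in `L⁰₊`. -/
def SolidHull (P : Measure Ω) (K : Set (Ω → ℝ)) : Set (Ω → ℝ) :=
  {f | f ∈ L0plus P ∧ ∃ h ∈ K, f ≤ᵐ[P] h}

/-- `L∞`: essentially bounded (a.e.-measurable) random variables. -/
def Linf (P : Measure Ω) : Set (Ω → ℝ) :=
  {f | AEMeasurable f P ∧ ∃ c : ℝ, ∀ᵐ ω ∂P, |f ω| ≤ c}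

/-- `L∞₊ = L⁰₊ ∩ L∞`. -/
def LinfPlus (P : Measure Ω) : Set (Ω → ℝ) := L0plus P ∩ Linf P

/-- `L` is solid: `0 ≤ u ≤ h` a.s. with `h ∈ L` implies `u ∈ L`. -/
def IsSolid (P : Measure Ω) (L : Set (Ω → ℝ)) : Prop :=
  ∀ u : Ω → ℝ, AEMeasurable u P → 0 ≤ᵐ[P] u → (∃ h ∈ L, u ≤ᵐ[P] h) → u ∈ L

/-- `A_α := α (L − 1) = { α(f − 1) : f ∈ L }`. -/
def Aset (L : Set (Ω → ℝ)) (α : ℝ) : Set (Ω → ℝ) :=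
  (fun f : Ω → ℝ => fun ω => α * (f ω - 1)) '' L

/-- `J := ⋃_{α ≥ 0} A_α`. -/
def Jset (L : Set (Ω → ℝ)) : Set (Ω → ℝ) := ⋃ α ∈ Ici (0 : ℝ), Aset L α

/-- The weak* topology on (representatives of) `L∞`, viewed as the dual of `L¹(P)`:
the topology induced by the maps `φ ↦ ∫ φ·u dP` for integrable `u`. -/
def weakStarTop (P : Measure Ω) : TopologicalSpace (Ω → ℝ) :=
  ⨅ (u : Ω → ℝ) (_ : Integrable u P),
    TopologicalSpace.induced (fun φ : Ω → ℝ => ∫ ω, φ ω * u ω ∂P) inferInstance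

/-- The witness set `K := { h ∈ L⁰₊ : P[h>0, g=0]=0 and E_Q[(h/g)·1_{g>0}] ≤ Q[g>0] }`. -/
def Kwitness (P Q : Measure Ω) (g : Ω → ℝ) : Set (Ω → ℝ) :=
  {h | h ∈ L0plus P ∧ P ({ω | 0 < h ω} ∩ {ω | g ω = 0}) = 0 ∧
    (∫⁻ ω in {ω | 0 < g ω}, ENNReal.ofReal (h ω / g ω) ∂Q) ≤ Q {ω | 0 < g ω}}

/-- The set `C` of the example: outcomes `1 − θ₁ + (θ₁ + θ₂)ξ` for `θ` in the constraint
set `Θ = { θ ∈ ℝ₊² : θ₂ ≤ √θ₁ ≤ 1 }`. -/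
def exampleC (ξ : Ω → ℝ) : Set (Ω → ℝ) :=
  {f | ∃ θ : ℝ × ℝ, (0 ≤ θ.1 ∧ 0 ≤ θ.2 ∧ θ.2 ≤ Real.sqrt θ.1 ∧ Real.sqrt θ.1 ≤ 1) ∧
    f = fun ω => 1 - θ.1 + (θ.1 + θ.2) * ξ ω}

open scoped ENNReal

section NumeraireDensity

def numeraireDensity {α : Type*} (g : α → ℝ) (u : α → ℝ≥0∞) (ω : α) : ℝ≥0∞ :=
  if 0 < g ω then ENNReal.ofReal (g ω) else u ω

variable {α : Type*} {g : α → ℝ} {u : α → ℝ≥0∞}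

lemma measurable_numeraireDensity [MeasurableSpace α] (hg : Measurable g)
    (hu : Measurable u) : Measurable (numeraireDensity g u) :=
  Measurable.ite (measurableSet_lt measurable_const hg) (ENNReal.measurable_ofReal.comp hg) hu

lemma numeraireDensity_ne_zero (hu : ∀ ω, u ω ≠ 0) (ω : α) : numeraireDensity g u ω ≠ 0 := by
  unfold numeraireDensity
  split_ifs with h
  · exact (ENNReal.ofReal_pos.mpr h).ne'
  · exact hu ω

lemma numeraireDensity_ne_top (hu : ∀ ω, u ω ≠ ⊤) (ω : α) : numeraireDensity g u ω ≠ ⊤ := by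
  unfold numeraireDensity
  split_ifs
  · exact ENNReal.ofReal_ne_top
  · exact hu ω

end NumeraireDensity

section ChangeOfNumeraire

variable {μ : Measure Ω} {f g : Ω → ℝ} {u : Ω → ℝ≥0∞}

lemma setOf_pos_ae_eq_of_ae_eq {g' : Ω → ℝ} (h : g =ᵐ[μ] g') :
    {ω | 0 < g ω} =ᵐ[μ] {ω | 0 < g' ω} := by
  filter_upwards [h] with ω hω
  change (0 < g ω) = (0 < g' ω)
  rw [hω]

lemma lintegral_ofReal_eq_setLIntegral_pos (hg : AEMeasurable g μ)
    (hfg : ∀ᵐ ω ∂μ, 0 < f ω → 0 < g ω) :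
    ∫⁻ ω, ENNReal.ofReal (f ω) ∂μ = ∫⁻ ω in {ω | 0 < g ω}, ENNReal.ofReal (f ω) ∂μ := by
  rw [← lintegral_indicator₀ (nullMeasurableSet_lt aemeasurable_const hg)]
  refine lintegral_congr_ae ?_
  filter_upwards [hfg] with ω hω
  by_cases hgω : 0 < g ω
  · simp [hgω]
  · have hfω : f ω ≤ 0 := not_lt.mp (mt hω hgω)
    simp [hgω, hfω]

lemma setLIntegral_pos_self_div (hg : AEMeasurable g μ) :
    ∫⁻ ω in {ω | 0 < g ω}, ENNReal.ofReal (g ω / g ω) ∂μ = μ {ω | 0 < g ω} := by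
  rw [← setLIntegral_one]
  refine lintegral_congr_ae ?_
  filter_upwards [ae_restrict_mem₀ (nullMeasurableSet_lt aemeasurable_const hg)] with ω hω
  rw [div_self (ne_of_gt hω), ENNReal.ofReal_one]

theorem setLIntegral_pos_div_withDensity {ρ : Ω → ℝ≥0∞} (hg : AEMeasurable g μ)
    (hρ : AEMeasurable ρ μ) (hρg : ∀ᵐ ω ∂μ, 0 < g ω → ρ ω = ENNReal.ofReal (g ω))
    (f : Ω → ℝ) :
    ∫⁻ ω in {ω | 0 < g ω}, ENNReal.ofReal (f ω / g ω) ∂(μ.withDensity ρ)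
      = ∫⁻ ω in {ω | 0 < g ω}, ENNReal.ofReal (f ω) ∂μ := by
  set S := {ω | 0 < hg.mk g ω}
  have hS : MeasurableSet S := measurableSet_lt measurable_const hg.measurable_mk
  have hgS : {ω | 0 < g ω} =ᵐ[μ] S := setOf_pos_ae_eq_of_ae_eq hg.ae_eq_mk
  have hpos : ∀ᵐ ω ∂μ.restrict S, 0 < g ω := by
    filter_upwards [ae_restrict_mem hS, ae_restrict_of_ae hg.ae_eq_mk] with ω hω hgω
    rwa [hgω]
  have hρS : ∀ᵐ ω ∂μ.restrict S, ρ ω = ENNReal.ofReal (g ω) := by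
    filter_upwards [hpos, ae_restrict_of_ae hρg] with ω hω hρω using hρω hω
  rw [Measure.restrict_congr_set hgS,
    Measure.restrict_congr_set ((withDensity_absolutelyContinuous μ ρ).ae_eq hgS),
    setLIntegral_withDensity_eq_setLIntegral_mul_non_measurable₀ μ hρ.restrict _ hS
      (hρS.mono fun ω hω => hω ▸ ENNReal.ofReal_lt_top)]
  refine lintegral_congr_ae ?_
  filter_upwards [hpos, hρS] with ω hω hρω
  rw [Pi.mul_apply, hρω, ← ENNReal.ofReal_mul hω.le, mul_div_cancel₀ _ hω.ne']

lemma numeraireDensity_ae_eq_ofReal {g' : Ω → ℝ} (h : g =ᵐ[μ] g') :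
    ∀ᵐ ω ∂μ, 0 < g ω → numeraireDensity g' u ω = ENNReal.ofReal (g ω) := by
  filter_upwards [h] with ω hω hpos
  rw [numeraireDensity, hω, if_pos (hω ▸ hpos)]

lemma lintegral_numeraireDensity_le (hg : Measurable g) :
    ∫⁻ ω, numeraireDensity g u ω ∂μ ≤ ∫⁻ ω, ENNReal.ofReal (g ω) ∂μ + ∫⁻ ω, u ω ∂μ := by
  rw [← lintegral_add_left hg.ennreal_ofReal]
  refine lintegral_mono fun ω => ?_
  unfold numeraireDensity
  split_ifs
  · exact le_self_add
  · exact le_add_self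

lemma exists_lintegral_numeraireDensity_ne_top (μ : Measure Ω) [SigmaFinite μ]
    (hg : Measurable g) (hgμ : ∫⁻ ω, ENNReal.ofReal (g ω) ∂μ ≠ ⊤) :
    ∃ u : Ω → ℝ≥0∞, Measurable u ∧ (∀ ω, u ω ≠ 0) ∧ (∀ ω, u ω ≠ ⊤) ∧
      ∫⁻ ω, numeraireDensity g u ω ∂μ ≠ ⊤ := by
  obtain ⟨u, hu_pos, hu_meas, hu_int⟩ :=
    exists_pos_lintegral_lt_of_sigmaFinite μ one_ne_zero
  refine ⟨fun ω => u ω, hu_meas.coe_nnreal_ennreal,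
    fun ω => ENNReal.coe_ne_zero.mpr (hu_pos ω).ne', fun ω => ENNReal.coe_ne_top, ?_⟩
  exact ne_top_of_le_ne_top (ENNReal.add_ne_top.mpr ⟨hgμ, (hu_int.trans ENNReal.one_lt_top).ne⟩)
    (lintegral_numeraireDensity_le hg)

end ChangeOfNumeraire

theorem exists_sigmaFinite_withDensity_eq (Q : Measure Ω) [SigmaFinite Q] {ρ : Ω → ℝ≥0∞}
    (hρ : Measurable ρ) (hρ0 : ∀ ω, ρ ω ≠ 0) (hρtop : ∀ ω, ρ ω ≠ ⊤) :
    ∃ μ : Measure Ω, SigmaFinite μ ∧ μ.withDensity ρ = Q := by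
  refine ⟨Q.withDensity ρ⁻¹,
    SigmaFinite.withDensity_of_ne_top' fun ω => ENNReal.inv_ne_top.mpr (hρ0 ω), ?_⟩
  simpa using withDensity_inv_same (μ := Q) hρ.inv
    (ae_of_all _ fun ω => ENNReal.inv_ne_zero.mpr (hρtop ω))
    (ae_of_all _ fun ω => ENNReal.inv_ne_top.mpr (hρ0 ω))

lemma StrictlyPositiveOn.ae_pos_imp_pos {P : Measure Ω} {C : Set (Ω → ℝ)} {f g : Ω → ℝ}
    (hsp : StrictlyPositiveOn P C g) (hg : 0 ≤ᵐ[P] g) (hf : f ∈ C) :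
    ∀ᵐ ω ∂P, 0 < f ω → 0 < g ω := by
  filter_upwards [measure_eq_zero_iff_ae_notMem.mp (hsp f hf), hg] with ω hω hgω hfω
  exact lt_of_le_of_ne hgω fun h => hω ⟨hfω, h.symm⟩

theorem IsNumeraire.exists_sigmaFinite_lintegral_eq_iSup {P : Measure Ω} {C : Set (Ω → ℝ)}
    {g : Ω → ℝ} (hgP : g ∈ L0plus P) (hg : g ∈ C) (hnum : IsNumeraire P C g) :
    ∃ μ : Measure Ω, SigmaFinite μ ∧ μ ≪ P ∧ P ≪ μ ∧
      (∫⁻ ω, ENNReal.ofReal (g ω) ∂μ) = (⨆ f ∈ C, ∫⁻ ω, ENNReal.ofReal (f ω) ∂μ) ∧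
      (⨆ f ∈ C, ∫⁻ ω, ENNReal.ofReal (f ω) ∂μ) < ⊤ := by
  obtain ⟨hsp, Q, ⟨hQ, hQP, hPQ⟩, hle⟩ := hnum
  have hgQ : AEMeasurable g Q := hgP.1.mono_ac hQP
  set ρ := numeraireDensity (hgQ.mk g) 1
  have hρ : Measurable ρ := measurable_numeraireDensity hgQ.measurable_mk measurable_const
  obtain ⟨μ, hμ, hμQ⟩ := exists_sigmaFinite_withDensity_eq Q hρ
    (numeraireDensity_ne_zero fun _ => one_ne_zero)
    (numeraireDensity_ne_top fun _ => ENNReal.one_ne_top)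
  have hQμ : Q ≪ μ := hμQ ▸ withDensity_absolutelyContinuous μ ρ
  have hμQ' : μ ≪ Q := hμQ ▸ withDensity_absolutelyContinuous' hρ.aemeasurable
    (ae_of_all _ (numeraireDensity_ne_zero fun _ => one_ne_zero))
  have hgμ : AEMeasurable g μ := hgQ.mono_ac hμQ'
  have hchange : ∀ f : Ω → ℝ, (∀ᵐ ω ∂P, 0 < f ω → 0 < g ω) → ∫⁻ ω, ENNReal.ofReal (f ω) ∂μ
      = ∫⁻ ω in {ω | 0 < g ω}, ENNReal.ofReal (f ω / g ω) ∂Q := by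
    intro f hfg
    rw [lintegral_ofReal_eq_setLIntegral_pos hgμ ((hμQ'.trans hQP).ae_le hfg), ← hμQ,
      setLIntegral_pos_div_withDensity hgμ hρ.aemeasurable
        (hμQ'.ae_le (numeraireDensity_ae_eq_ofReal hgQ.ae_eq_mk))]
  have hgval : ∫⁻ ω, ENNReal.ofReal (g ω) ∂μ = Q {ω | 0 < g ω} := by
    rw [hchange g (ae_of_all _ fun _ => id), setLIntegral_pos_self_div hgQ]
  have hsup : (⨆ f ∈ C, ∫⁻ ω, ENNReal.ofReal (f ω) ∂μ) ≤ Q {ω | 0 < g ω} :=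
    iSup₂_le fun f hf => (hchange f (hsp.ae_pos_imp_pos hgP.2 hf)).trans_le (hle f hf)
  exact ⟨μ, hμ, hμQ'.trans hQP, hPQ.trans hQμ,
    le_antisymm (le_biSup (fun f => ∫⁻ ω, ENNReal.ofReal (f ω) ∂μ) hg) (hgval ▸ hsup),
    hsup.trans_lt (measure_lt_top Q _)⟩

theorem isNumeraire_of_sigmaFinite_lintegral_eq_iSup {P : Measure Ω} [NeZero P]
    {C : Set (Ω → ℝ)} {g : Ω → ℝ} (hgP : AEMeasurable g P) (hsp : StrictlyPositiveOn P C g)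
    (μ : Measure Ω) [SigmaFinite μ] (hμP : μ ≪ P) (hPμ : P ≪ μ)
    (hgsup : (∫⁻ ω, ENNReal.ofReal (g ω) ∂μ) = (⨆ f ∈ C, ∫⁻ ω, ENNReal.ofReal (f ω) ∂μ))
    (hfin : (⨆ f ∈ C, ∫⁻ ω, ENNReal.ofReal (f ω) ∂μ) < ⊤) :
    IsNumeraire P C g := by
  refine ⟨hsp, ?_⟩
  have hgμ : AEMeasurable g μ := hgP.mono_ac hμP
  have hgint : ∫⁻ ω, ENNReal.ofReal (hgμ.mk g ω) ∂μ ≠ ⊤ := by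
    have hmk : ∫⁻ ω, ENNReal.ofReal (hgμ.mk g ω) ∂μ = ∫⁻ ω, ENNReal.ofReal (g ω) ∂μ :=
      lintegral_congr_ae (hgμ.ae_eq_mk.mono fun _ hω => congrArg ENNReal.ofReal hω.symm)
    rw [hmk, hgsup]
    exact hfin.ne
  obtain ⟨u, hu, hu0, -, hρint⟩ :=
    exists_lintegral_numeraireDensity_ne_top μ hgμ.measurable_mk hgint
  set ρ := numeraireDensity (hgμ.mk g) u
  have hρ : Measurable ρ := measurable_numeraireDensity hgμ.measurable_mk hu
  set ν := μ.withDensity ρ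
  have : IsFiniteMeasure ν := isFiniteMeasure_withDensity hρint
  have hνμ : ν ≪ μ := withDensity_absolutelyContinuous μ ρ
  have hPν : P ≪ ν := hPμ.trans (withDensity_absolutelyContinuous' hρ.aemeasurable
    (ae_of_all _ (numeraireDensity_ne_zero hu0)))
  have : NeZero ν :=
    ⟨fun h => NeZero.ne P (Measure.absolutelyContinuous_zero_iff.mp (h ▸ hPν))⟩
  refine ⟨(ν univ)⁻¹ • ν, ⟨inferInstance, Measure.smul_absolutelyContinuous.trans
    (hνμ.trans hμP), hPν.trans (Measure.absolutelyContinuous_smul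
      (ENNReal.inv_ne_zero.mpr (measure_ne_top ν univ)))⟩, fun f hf => ?_⟩
  have hchange : ∀ f : Ω → ℝ, ∫⁻ ω in {ω | 0 < g ω}, ENNReal.ofReal (f ω / g ω) ∂ν
      = ∫⁻ ω in {ω | 0 < g ω}, ENNReal.ofReal (f ω) ∂μ :=
    setLIntegral_pos_div_withDensity hgμ hρ.aemeasurable
      (numeraireDensity_ae_eq_ofReal hgμ.ae_eq_mk)
  rw [setLIntegral_smul_measure, Measure.smul_apply, smul_eq_mul, smul_eq_mul]
  gcongr
  calc ∫⁻ ω in {ω | 0 < g ω}, ENNReal.ofReal (f ω / g ω) ∂ν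
      = ∫⁻ ω in {ω | 0 < g ω}, ENNReal.ofReal (f ω) ∂μ := hchange f
    _ ≤ ∫⁻ ω, ENNReal.ofReal (f ω) ∂μ := setLIntegral_le_lintegral _ _
    _ ≤ ⨆ f ∈ C, ∫⁻ ω, ENNReal.ofReal (f ω) ∂μ :=
      le_biSup (fun f => ∫⁻ ω, ENNReal.ofReal (f ω) ∂μ) hf
    _ = ∫⁻ ω in {ω | 0 < g ω}, ENNReal.ofReal (g ω) ∂μ :=
      hgsup.symm.trans (lintegral_ofReal_eq_setLIntegral_pos hgμ (ae_of_all _ fun _ => id))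
    _ = ν {ω | 0 < g ω} := by
      rw [← hchange g, setLIntegral_pos_self_div (hgμ.mono_ac hνμ)]

theorem numeraire_iff_sigmaFinite_supporting_measure_general
    (P : Measure Ω) [IsProbabilityMeasure P]
    (C : Set (Ω → ℝ)) (hC : C ⊆ L0plus P)
    (g : Ω → ℝ) (hg : g ∈ C) (hsp : StrictlyPositiveOn P C g) :
    IsNumeraire P C g ↔
      ∃ μ : Measure Ω, SigmaFinite μ ∧ μ ≪ P ∧ P ≪ μ ∧
        (∫⁻ ω, ENNReal.ofReal (g ω) ∂μ) = (⨆ f ∈ C, ∫⁻ ω, ENNReal.ofReal (f ω) ∂μ) ∧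
        (⨆ f ∈ C, ∫⁻ ω, ENNReal.ofReal (f ω) ∂μ) < ⊤ :=
  ⟨IsNumeraire.exists_sigmaFinite_lintegral_eq_iSup (hC hg) hg,
    fun ⟨μ, _, hμP, hPμ, hgsup, hfin⟩ =>
      isNumeraire_of_sigmaFinite_lintegral_eq_iSup (hC hg).1 hsp μ hμP hPμ hgsup hfin⟩

/-- `g` is a numéraire of `C` iff there exists a σ-finite measure `μ`
equivalent to `P` with `∫ g dμ = sup_{f∈C} ∫ f dμ < ∞`. -/
theorem numeraire_iff_sigmaFinite_supporting_measure
    (P : Measure Ω) [IsProbabilityMeasure P]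
    (C : Set (Ω → ℝ)) (hC : C ⊆ L0plus P) (hconv : Convex ℝ C)
    (g : Ω → ℝ) (hg : g ∈ C) (hsp : StrictlyPositiveOn P C g) :
    IsNumeraire P C g ↔
      ∃ μ : Measure Ω, SigmaFinite μ ∧ μ ≪ P ∧ P ≪ μ ∧
        (∫⁻ ω, ENNReal.ofReal (g ω) ∂μ) = (⨆ f ∈ C, ∫⁻ ω, ENNReal.ofReal (f ω) ∂μ) ∧
        (⨆ f ∈ C, ∫⁻ ω, ENNReal.ofReal (f ω) ∂μ) < ⊤ :=
  numeraire_iff_sigmaFinite_supporting_measure_general P C hC g hg hsp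

end
end

section
/- Let C ⊆ L⁰₊ be convex, let g ∈ C be a numéraire of C, and let Q be an equivalent probability witnessing this, i.e., E_Q[(f/g)·1_{g>0}] ≤ Q[g>0] for all f ∈ C. Then the set K := { h ∈ L⁰₊ : P[h>0, g=0]=0 and E_Q[(h/g)·1_{g>0}] ≤ Q[g>0] } contains C, is convex and closed in probability, satisfies property (CS3) with respect to g, and is bounded in probability; consequently cs_g(C) ⊆ K and cs_g(C) is bounded. -/
open MeasureTheory Filter Set

noncomputable section

variable {Ω : Type*} [MeasurableSpace Ω]

/-!
Write `Φ(h) := E_Q[(h/g)·1_{g>0}]`. On `L⁰₊` the functional `Φ` is additive and positively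
homogeneous, lower semicontinuous under a.s. convergence (Fatou), and satisfies
`Φ((1+δ)f − δg) + δ·Q[g>0] = (1+δ)·Φ(f)`; this gives convexity, closedness and (CS3) of `K`.
For boundedness, Markov's inequality in units of `g` gives
`Q[h > ℓ] ≤ Q[g > √ℓ] + Φ(h)/√ℓ ≤ Q[g > √ℓ] + 1/√ℓ` uniformly on `K`, and the bound transfers
to `P` because `P` has a `Q`-integrable density, hence is uniformly absolutely continuous
with respect to `Q`.
-/

open scoped ENNReal Topology

lemma measure_pos_inter_zero_eq_zero_iff {μ : Measure Ω} {g h : Ω → ℝ} :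
    μ ({ω | 0 < h ω} ∩ {ω | g ω = 0}) = 0 ↔ ∀ᵐ ω ∂μ, g ω = 0 → h ω ≤ 0 := by
  rw [measure_eq_zero_iff_ae_notMem]
  refine eventually_congr (.of_forall fun ω => ?_)
  simp only [mem_inter_iff, mem_ofPred_eq, not_and, not_lt, imp_not_comm]

lemma BoundedInProb.mono {P : Measure Ω} {A B : Set (Ω → ℝ)} (hB : BoundedInProb P B)
    (hAB : A ⊆ B) : BoundedInProb P A :=
  tendsto_of_tendsto_of_tendsto_of_le_of_le tendsto_const_nhds hB (fun _ => bot_le)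
    fun _ => biSup_mono fun _ hf => hAB hf

lemma MeasureTheory.Measure.AbsolutelyContinuous.exists_pos_forall_measure_lt
    {P Q : Measure Ω} [IsFiniteMeasure P] [SigmaFinite Q] (hPQ : P ≪ Q) {ε : ℝ≥0∞}
    (hε : ε ≠ 0) : ∃ δ > 0, ∀ A, Q A < δ → P A < ε := by
  obtain ⟨δ, hδ, hδε⟩ :=
    exists_pos_setLIntegral_lt_of_measure_lt (Measure.lintegral_rnDeriv_lt_top P Q).ne hε
  refine ⟨δ, hδ, fun A hA => ?_⟩
  rw [← Measure.withDensity_rnDeriv_eq P Q hPQ, withDensity_apply']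
  exact hδε A hA

lemma BoundedInProb.of_absolutelyContinuous {P Q : Measure Ω} [IsFiniteMeasure P] [SigmaFinite Q]
    {K : Set (Ω → ℝ)} (hK : BoundedInProb Q K) (hPQ : P ≪ Q) : BoundedInProb P K := by
  refine ENNReal.tendsto_nhds_zero.2 fun ε hε => ?_
  obtain ⟨δ, hδ, hPδ⟩ := hPQ.exists_pos_forall_measure_lt hε.ne'
  filter_upwards [hK.eventually (gt_mem_nhds hδ)] with ℓ hℓ
  refine iSup₂_le fun f hf => (hPδ _ (lt_of_le_of_lt ?_ hℓ)).le
  exact le_iSup₂ (f := fun f (_ : f ∈ K) => Q {ω | ℓ < f ω}) f hf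

lemma tendsto_measure_lt_atTop_zero {μ : Measure Ω} [IsFiniteMeasure μ] {g : Ω → ℝ}
    (hg : AEMeasurable g μ) : Tendsto (fun r : ℝ => μ {ω | r < g ω}) atTop (𝓝 0) := by
  have hempty : ⋂ r : ℝ, {ω | r < g ω} = ∅ :=
    eq_empty_of_forall_notMem fun ω hω => lt_irrefl (g ω) (mem_iInter.1 hω (g ω))
  have h := tendsto_measure_iInter_atTop (μ := μ) (s := fun r : ℝ => {ω | r < g ω})
    (fun r => nullMeasurableSet_lt aemeasurable_const hg)
    (fun r r' hrr' ω hω => lt_of_le_of_lt hrr' hω) ⟨0, measure_ne_top μ _⟩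
  rwa [hempty, measure_empty] at h

section RatioLIntegral

variable {μ : Measure Ω} {g : Ω → ℝ}

/-- The paper's `E_μ[(h/g)·1_{g>0}]`. -/
def ratioLIntegral (μ : Measure Ω) (g h : Ω → ℝ) : ℝ≥0∞ :=
  ∫⁻ ω in {ω | 0 < g ω}, ENNReal.ofReal (h ω / g ω) ∂μ

lemma ae_restrict_setOf_pos (hg : AEMeasurable g μ) : ∀ᵐ ω ∂μ.restrict {ω | 0 < g ω}, 0 < g ω :=
  ae_restrict_mem₀ (nullMeasurableSet_lt aemeasurable_const hg)

lemma ratioLIntegral_smul_add_smul (hg : AEMeasurable g μ) {x y : Ω → ℝ} (hx : AEMeasurable x μ)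
    (hx0 : 0 ≤ᵐ[μ] x) (hy0 : 0 ≤ᵐ[μ] y) {a b : ℝ} (ha : 0 ≤ a) (hb : 0 ≤ b) :
    ratioLIntegral μ g (a • x + b • y) =
      ENNReal.ofReal a * ratioLIntegral μ g x + ENNReal.ofReal b * ratioLIntegral μ g y := by
  have hpt : (fun ω => ENNReal.ofReal ((a • x + b • y) ω / g ω)) =ᵐ[μ.restrict {ω | 0 < g ω}]
      fun ω => ENNReal.ofReal a * ENNReal.ofReal (x ω / g ω) +
        ENNReal.ofReal b * ENNReal.ofReal (y ω / g ω) := by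
    filter_upwards [ae_restrict_setOf_pos hg, ae_restrict_of_ae hx0, ae_restrict_of_ae hy0]
      with ω hgω hxω hyω
    simp only [Pi.add_apply, Pi.smul_apply, smul_eq_mul, add_div, mul_div_assoc]
    rw [ENNReal.ofReal_add (mul_nonneg ha (div_nonneg hxω hgω.le))
      (mul_nonneg hb (div_nonneg hyω hgω.le)), ENNReal.ofReal_mul ha, ENNReal.ofReal_mul hb]
  have hxm : AEMeasurable (fun ω => ENNReal.ofReal (x ω / g ω)) (μ.restrict {ω | 0 < g ω}) :=
    (hx.div hg).ennreal_ofReal.restrict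
  rw [ratioLIntegral, lintegral_congr_ae hpt, lintegral_add_left' (hxm.const_mul _),
    lintegral_const_mul' _ _ ENNReal.ofReal_ne_top, lintegral_const_mul' _ _ ENNReal.ofReal_ne_top]
  rfl

lemma ratioLIntegral_one_add_mul_sub_mul (hg : AEMeasurable g μ) {f : Ω → ℝ} {δ : ℝ} (hδ : 0 ≤ δ)
    (hF : 0 ≤ᵐ[μ] fun ω => (1 + δ) * f ω - δ * g ω) :
    ratioLIntegral μ g (fun ω => (1 + δ) * f ω - δ * g ω) + ENNReal.ofReal δ * μ {ω | 0 < g ω} =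
      ENNReal.ofReal (1 + δ) * ratioLIntegral μ g f := by
  have hpt : (fun ω => ENNReal.ofReal (((1 + δ) * f ω - δ * g ω) / g ω) + ENNReal.ofReal δ)
      =ᵐ[μ.restrict {ω | 0 < g ω}]
        fun ω => ENNReal.ofReal (1 + δ) * ENNReal.ofReal (f ω / g ω) := by
    filter_upwards [ae_restrict_setOf_pos hg, ae_restrict_of_ae hF] with ω hgω hFω
    rw [← ENNReal.ofReal_add (div_nonneg hFω hgω.le) hδ, ← ENNReal.ofReal_mul (by linarith)]
    congr 1
    field_simp
    ring
  rw [ratioLIntegral, ratioLIntegral, ← setLIntegral_const,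
    ← lintegral_add_right _ measurable_const, lintegral_congr_ae hpt,
    lintegral_const_mul' _ _ ENNReal.ofReal_ne_top]

lemma ratioLIntegral_le_liminf (hg : AEMeasurable g μ) {f : ℕ → Ω → ℝ} {h : Ω → ℝ}
    (hf : ∀ n, AEMeasurable (f n) μ) (hfh : ∀ᵐ ω ∂μ, Tendsto (fun n => f n ω) atTop (𝓝 (h ω))) :
    ratioLIntegral μ g h ≤ liminf (fun n => ratioLIntegral μ g (f n)) atTop := by
  have hlim : (fun ω => ENNReal.ofReal (h ω / g ω)) =ᵐ[μ.restrict {ω | 0 < g ω}]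
      fun ω => liminf (fun n => ENNReal.ofReal (f n ω / g ω)) atTop := by
    filter_upwards [ae_restrict_of_ae hfh] with ω hω
    exact ((ENNReal.continuous_ofReal.tendsto _).comp (hω.div_const _)).liminf_eq.symm
  exact (lintegral_congr_ae hlim).trans_le
    (lintegral_liminf_le' fun n => ((hf n).div hg).ennreal_ofReal.restrict)

lemma measure_lt_le_measure_lt_add_ratioLIntegral (hg : AEMeasurable g μ) (hg0 : 0 ≤ᵐ[μ] g)
    {h : Ω → ℝ} (hh : AEMeasurable h μ) (hhg : ∀ᵐ ω ∂μ, g ω = 0 → h ω ≤ 0) {ℓ r : ℝ}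
    (hℓ : 0 < ℓ) (hr : 0 < r) :
    μ {ω | ℓ < h ω} ≤ μ {ω | r < g ω} + ENNReal.ofReal (r / ℓ) * ratioLIntegral μ g h := by
  set A := {ω | ENNReal.ofReal (ℓ / r) ≤ ENNReal.ofReal (h ω / g ω)}
  have hmarkov : μ (A ∩ {ω | 0 < g ω}) ≤ ENNReal.ofReal (r / ℓ) * ratioLIntegral μ g h := calc
    μ (A ∩ {ω | 0 < g ω}) ≤ μ.restrict {ω | 0 < g ω} A := Measure.le_restrict_apply _ _
    _ = ENNReal.ofReal (r / ℓ) * (ENNReal.ofReal (ℓ / r) * μ.restrict {ω | 0 < g ω} A) := by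
      rw [← mul_assoc, ← ENNReal.ofReal_mul (by positivity), div_mul_div_cancel₀ hℓ.ne',
        div_self hr.ne', ENNReal.ofReal_one, one_mul]
    _ ≤ _ := by gcongr; exact mul_meas_ge_le_lintegral₀ ((hh.div hg).ennreal_ofReal.restrict) _
  have hcover : ∀ᵐ ω ∂μ, ω ∈ {ω | ℓ < h ω} → ω ∈ {ω | r < g ω} ∪ (A ∩ {ω | 0 < g ω}) := by
    filter_upwards [hg0, hhg] with ω hg0ω hhgω (hℓh : ℓ < h ω)
    have hgpos : 0 < g ω := lt_of_le_of_ne hg0ω fun h0 => by linarith [hhgω h0.symm]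
    by_cases hrg : r < g ω
    · exact Or.inl hrg
    · refine Or.inr ⟨ENNReal.ofReal_le_ofReal ?_, hgpos⟩
      rw [div_le_div_iff₀ hr hgpos]
      nlinarith
  calc μ {ω | ℓ < h ω} ≤ μ ({ω | r < g ω} ∪ (A ∩ {ω | 0 < g ω})) := measure_mono_ae hcover
    _ ≤ _ := (measure_union_le _ _).trans (by gcongr)

lemma boundedInProb_of_ratioLIntegral_le [IsFiniteMeasure μ] (hg : AEMeasurable g μ)
    (hg0 : 0 ≤ᵐ[μ] g) {K : Set (Ω → ℝ)} {c : ℝ≥0∞} (hc : c ≠ ∞)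
    (hK : ∀ h ∈ K, AEMeasurable h μ ∧ (∀ᵐ ω ∂μ, g ω = 0 → h ω ≤ 0) ∧ ratioLIntegral μ g h ≤ c) :
    BoundedInProb μ K := by
  have hbound : Tendsto (fun ℓ : ℝ => μ {ω | √ℓ < g ω} + ENNReal.ofReal (1 / √ℓ) * c) atTop
      (𝓝 0) := by
    have h1 := (tendsto_measure_lt_atTop_zero hg).comp Real.tendsto_sqrt_atTop
    have h2 : Tendsto (fun ℓ : ℝ => ENNReal.ofReal (1 / √ℓ)) atTop (𝓝 0) := by
      simpa using ENNReal.tendsto_ofReal (tendsto_inv_atTop_zero.comp Real.tendsto_sqrt_atTop)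
    simpa using h1.add (ENNReal.Tendsto.mul_const h2 (Or.inr hc))
  refine tendsto_of_tendsto_of_tendsto_of_le_of_le' tendsto_const_nhds hbound
    (.of_forall fun _ => bot_le) ?_
  filter_upwards [eventually_gt_atTop 0] with ℓ hℓ
  refine iSup₂_le fun h hh => ?_
  obtain ⟨hhm, hhg, hhc⟩ := hK h hh
  calc μ {ω | ℓ < h ω} ≤ μ {ω | √ℓ < g ω} + ENNReal.ofReal (√ℓ / ℓ) * ratioLIntegral μ g h :=
        measure_lt_le_measure_lt_add_ratioLIntegral hg hg0 hhm hhg hℓ (Real.sqrt_pos.2 hℓ)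
    _ ≤ _ := by rw [Real.sqrt_div_self']; gcongr

end RatioLIntegral

section Kwitness

variable {P Q : Measure Ω} {g : Ω → ℝ}

lemma mem_Kwitness_iff {h : Ω → ℝ} :
    h ∈ Kwitness P Q g ↔ AEMeasurable h P ∧ 0 ≤ᵐ[P] h ∧ (∀ᵐ ω ∂P, g ω = 0 → h ω ≤ 0) ∧
      ratioLIntegral Q g h ≤ Q {ω | 0 < g ω} := by
  rw [← measure_pos_inter_zero_eq_zero_iff]
  exact and_assoc

lemma convex_Kwitness (hQP : Q ≪ P) (hg : AEMeasurable g P) : Convex ℝ (Kwitness P Q g) := by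
  intro x hx y hy a b ha hb hab
  obtain ⟨hxm, hx0, hxg, hxQ⟩ := mem_Kwitness_iff.1 hx
  obtain ⟨hym, hy0, hyg, hyQ⟩ := mem_Kwitness_iff.1 hy
  refine mem_Kwitness_iff.2 ⟨(hxm.const_smul a).add (hym.const_smul b), ?_, ?_, ?_⟩
  · filter_upwards [hx0, hy0] with ω hxω hyω
    simp only [Pi.add_apply, Pi.smul_apply, smul_eq_mul, Pi.zero_apply] at hxω hyω ⊢
    positivity
  · filter_upwards [hxg, hyg] with ω hxω hyω hgω
    simp only [Pi.add_apply, Pi.smul_apply, smul_eq_mul]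
    nlinarith [hxω hgω, hyω hgω]
  · calc ratioLIntegral Q g (a • x + b • y)
        = ENNReal.ofReal a * ratioLIntegral Q g x + ENNReal.ofReal b * ratioLIntegral Q g y :=
          ratioLIntegral_smul_add_smul (hg.mono_ac hQP) (hxm.mono_ac hQP) (hQP.ae_le hx0)
            (hQP.ae_le hy0) ha hb
      _ ≤ ENNReal.ofReal a * Q {ω | 0 < g ω} + ENNReal.ofReal b * Q {ω | 0 < g ω} := by gcongr
      _ = Q {ω | 0 < g ω} := by
          rw [← add_mul, ← ENNReal.ofReal_add ha hb, hab, ENNReal.ofReal_one, one_mul]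

lemma closedInProb_Kwitness (hQP : Q ≪ P) (hg : AEMeasurable g P) :
    ClosedInProb P (Kwitness P Q g) := by
  intro f h hfK hh hfh
  obtain ⟨ns, -, hlim⟩ := hfh.exists_seq_tendsto_ae
  have hf n := mem_Kwitness_iff.1 (hfK (ns n))
  have hall : ∀ᵐ ω ∂P, ∀ n, 0 ≤ f (ns n) ω ∧ (g ω = 0 → f (ns n) ω ≤ 0) :=
    ae_all_iff.2 fun n => (hf n).2.1.and (hf n).2.2.1
  refine mem_Kwitness_iff.2 ⟨hh, ?_, ?_, ?_⟩
  · filter_upwards [hall, hlim] with ω hω hωlim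
    exact ge_of_tendsto' hωlim fun n => (hω n).1
  · filter_upwards [hall, hlim] with ω hω hωlim hgω
    exact le_of_tendsto' hωlim fun n => (hω n).2 hgω
  · calc ratioLIntegral Q g h ≤ liminf (fun n => ratioLIntegral Q g (f (ns n))) atTop :=
          ratioLIntegral_le_liminf (hg.mono_ac hQP) (fun n => (hf n).1.mono_ac hQP)
            (hQP.ae_le hlim)
      _ ≤ Q {ω | 0 < g ω} := liminf_le_of_frequently_le' (.of_forall fun n => (hf n).2.2.2)

lemma one_add_mul_sub_mul_mem_Kwitness [IsFiniteMeasure Q] (hQP : Q ≪ P) (hg : AEMeasurable g P)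
    {f : Ω → ℝ} (hf : f ∈ Kwitness P Q g) {δ : ℝ} (hδ : 0 ≤ δ)
    (hF : (fun ω => (1 + δ) * f ω - δ * g ω) ∈ L0plus P) :
    (fun ω => (1 + δ) * f ω - δ * g ω) ∈ Kwitness P Q g := by
  obtain ⟨-, -, hfg, hfQ⟩ := mem_Kwitness_iff.1 hf
  refine mem_Kwitness_iff.2 ⟨hF.1, hF.2, ?_, ?_⟩
  · filter_upwards [hfg] with ω hfω hgω
    nlinarith [hfω hgω]
  · have hfin : ENNReal.ofReal δ * Q {ω | 0 < g ω} ≠ ∞ :=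
      ENNReal.mul_ne_top ENNReal.ofReal_ne_top (measure_ne_top Q _)
    refine (ENNReal.add_le_add_iff_right hfin).1 ?_
    calc _ = ENNReal.ofReal (1 + δ) * ratioLIntegral Q g f :=
          ratioLIntegral_one_add_mul_sub_mul (hg.mono_ac hQP) hδ (hQP.ae_le hF.2)
      _ ≤ ENNReal.ofReal (1 + δ) * Q {ω | 0 < g ω} := by gcongr
      _ = Q {ω | 0 < g ω} + ENNReal.ofReal δ * Q {ω | 0 < g ω} := by
          rw [ENNReal.ofReal_add zero_le_one hδ, ENNReal.ofReal_one, add_mul, one_mul]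

lemma boundedInProb_Kwitness [IsFiniteMeasure P] [IsFiniteMeasure Q] (hQP : Q ≪ P) (hPQ : P ≪ Q)
    (hg : g ∈ L0plus P) : BoundedInProb P (Kwitness P Q g) := by
  refine BoundedInProb.of_absolutelyContinuous ?_ hPQ
  refine boundedInProb_of_ratioLIntegral_le (hg.1.mono_ac hQP) (hQP.ae_le hg.2)
    (measure_ne_top Q {ω | 0 < g ω}) fun h hh => ?_
  obtain ⟨hhm, -, hhg, hhQ⟩ := mem_Kwitness_iff.1 hh
  exact ⟨hhm.mono_ac hQP, hQP.ae_le hhg, hhQ⟩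

end Kwitness

theorem Kwitness_properties_general
    (P : Measure Ω) [IsProbabilityMeasure P]
    (C : Set (Ω → ℝ)) (hC : C ⊆ L0plus P)
    (g : Ω → ℝ) (hg : g ∈ C) (hsp : StrictlyPositiveOn P C g)
    (Q : Measure Ω) (hQ : EquivProb P Q)
    (hnum : ∀ f ∈ C,
      (∫⁻ ω in {ω | 0 < g ω}, ENNReal.ofReal (f ω / g ω) ∂Q) ≤ Q {ω | 0 < g ω}) :
    C ⊆ Kwitness P Q g ∧ Convex ℝ (Kwitness P Q g) ∧ ClosedInProb P (Kwitness P Q g) ∧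
    (∀ f ∈ Kwitness P Q g, ∀ δ : ℝ, 0 ≤ δ →
      (fun ω => (1 + δ) * f ω - δ * g ω) ∈ L0plus P →
      (fun ω => (1 + δ) * f ω - δ * g ω) ∈ Kwitness P Q g) ∧
    BoundedInProb P (Kwitness P Q g) ∧
    csSet P C g ⊆ Kwitness P Q g ∧ BoundedInProb P (csSet P C g) := by
  obtain ⟨_, hQP, hPQ⟩ := hQ
  have hgm : AEMeasurable g P := (hC hg).1
  have hCK : C ⊆ Kwitness P Q g := fun f hf => ⟨hC hf, hsp f hf, hnum f hf⟩
  have hK : Kwitness P Q g ∈ CSclass P C g :=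
    ⟨fun _ hh => hh.1, hCK, convex_Kwitness hQP hgm, closedInProb_Kwitness hQP hgm,
      fun _ hf _ hδ hF => one_add_mul_sub_mul_mem_Kwitness hQP hgm hf hδ hF⟩
  have hbdd : BoundedInProb P (Kwitness P Q g) := boundedInProb_Kwitness hQP hPQ (hC hg)
  have hcs : csSet P C g ⊆ Kwitness P Q g := biInter_subset_of_mem hK
  exact ⟨hCK, hK.2.2.1, hK.2.2.2.1, hK.2.2.2.2, hbdd, hcs, hbdd.mono hcs⟩

/-- if `g ∈ C` is a numéraire of `C` witnessed by the equivalent probability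
`Q`, then `K := { h ∈ L⁰₊ : P[h>0,g=0]=0, E_Q[(h/g)1_{g>0}] ≤ Q[g>0] }` contains `C`, is
convex, closed in probability, satisfies (CS3), is bounded; hence `cs_g(C) ⊆ K` and
`cs_g(C)` is bounded. -/
theorem Kwitness_properties
    (P : Measure Ω) [IsProbabilityMeasure P]
    (C : Set (Ω → ℝ)) (hC : C ⊆ L0plus P) (hconv : Convex ℝ C)
    (g : Ω → ℝ) (hg : g ∈ C) (hsp : StrictlyPositiveOn P C g)
    (Q : Measure Ω) (hQ : EquivProb P Q)
    (hnum : ∀ f ∈ C,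
      (∫⁻ ω in {ω | 0 < g ω}, ENNReal.ofReal (f ω / g ω) ∂Q) ≤ Q {ω | 0 < g ω}) :
    C ⊆ Kwitness P Q g ∧ Convex ℝ (Kwitness P Q g) ∧ ClosedInProb P (Kwitness P Q g) ∧
    (∀ f ∈ Kwitness P Q g, ∀ δ : ℝ, 0 ≤ δ →
      (fun ω => (1 + δ) * f ω - δ * g ω) ∈ L0plus P →
      (fun ω => (1 + δ) * f ω - δ * g ω) ∈ Kwitness P Q g) ∧
    BoundedInProb P (Kwitness P Q g) ∧
    csSet P C g ⊆ Kwitness P Q g ∧ BoundedInProb P (csSet P C g) :=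
  Kwitness_properties_general P C hC g hg hsp Q hQ hnum
end
end

section
/- Let C ⊆ L⁰₊ be convex. If C admits a numéraire (i.e., C^num ≠ ∅), then C is bounded in probability. -/
open MeasureTheory Filter Set

noncomputable section

variable {Ω : Type*} [MeasurableSpace Ω]

/-! Under `Q` the ratios `f / g` have integral at most one on `{g > 0}`, so Markov's inequality
bounds `Q[f / g ≥ t]` by `1 / t` uniformly over `C`, and absolute continuity of `P` with respect
to the finite `Q` turns this into a uniform bound under `P`. Since `g` is a single random
variable, `P[g > M]` is small for large `M`; outside `{g > M}` and the null set
`{f > 0, g = 0}`, `f > ℓ` forces `f / g ≥ ℓ / M`. -/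

open scoped ENNReal Topology

lemma boundedInProb_of_forall_eventually {P : Measure Ω} {A : Set (Ω → ℝ)}
    (h : ∀ ε : ℝ≥0∞, 0 < ε → ∀ᶠ ℓ in atTop, ∀ f ∈ A, P {ω | ℓ < f ω} ≤ ε) :
    BoundedInProb P A := by
  rw [BoundedInProb, ENNReal.tendsto_nhds_zero]
  exact fun ε hε => (h ε hε).mono fun ℓ hℓ => iSup₂_le hℓ

lemma tendsto_measure_setOf_lt_atTop {μ : Measure Ω} [IsFiniteMeasure μ] {g : Ω → ℝ}
    (hg : AEMeasurable g μ) : Tendsto (fun ℓ : ℝ => μ {ω | ℓ < g ω}) atTop (𝓝 0) := by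
  have hempty : ⋂ ℓ : ℝ, {ω | ℓ < g ω} = ∅ :=
    eq_empty_of_forall_notMem fun ω hω => lt_irrefl (g ω) (mem_iInter.1 hω (g ω))
  have := tendsto_measure_iInter_atTop (μ := μ) (s := fun ℓ : ℝ => {ω | ℓ < g ω})
    (fun ℓ => hg.nullMeasurable measurableSet_Ioi)
    (fun ℓ ℓ' hℓ ω (hω : ℓ' < g ω) => (hℓ.trans_lt hω : ℓ < g ω)) ⟨0, measure_ne_top μ _⟩
  rwa [hempty, measure_empty] at this

lemma Measure.AbsolutelyContinuous.exists_pos_measure_lt_of_measure_lt {μ ν : Measure Ω}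
    [IsFiniteMeasure μ] [SigmaFinite ν] (hμν : μ ≪ ν) {ε : ℝ≥0∞} (hε : ε ≠ 0) :
    ∃ δ > 0, ∀ s, ν s < δ → μ s < ε := by
  obtain ⟨δ, hδ, hint⟩ :=
    exists_pos_setLIntegral_lt_of_measure_lt (Measure.lintegral_rnDeriv_lt_top μ ν).ne hε
  exact ⟨δ, hδ, fun s hs => Measure.setLIntegral_rnDeriv hμν s ▸ hint s hs⟩

lemma measure_inter_setOf_le_le_inv_of_setLIntegral_le_one {μ : Measure Ω} {s : Set Ω}
    {h : Ω → ℝ} (hh : AEMeasurable h (μ.restrict s))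
    (hint : ∫⁻ ω in s, ENNReal.ofReal (h ω) ∂μ ≤ 1) {t : ℝ} (ht : 0 < t) :
    μ (s ∩ {ω | t ≤ h ω}) ≤ (ENNReal.ofReal t)⁻¹ :=
  calc μ (s ∩ {ω | t ≤ h ω})
      ≤ μ.restrict s {ω | ENNReal.ofReal t ≤ ENNReal.ofReal (h ω)} := by
        refine (measure_mono fun ω hω => ?_).trans (Measure.le_restrict_apply _ _)
        exact ⟨ENNReal.ofReal_le_ofReal hω.2, hω.1⟩
    _ ≤ (∫⁻ ω in s, ENNReal.ofReal (h ω) ∂μ) / ENNReal.ofReal t :=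
        meas_ge_le_lintegral_div hh.ennreal_ofReal (by simpa using ht) ENNReal.ofReal_ne_top
    _ ≤ (ENNReal.ofReal t)⁻¹ := by
        simpa only [one_div] using ENNReal.div_le_div_right hint _

lemma setOf_lt_ae_le_union {P : Measure Ω} {f g : Ω → ℝ} (hg : 0 ≤ᵐ[P] g)
    (hfg : P ({ω | 0 < f ω} ∩ {ω | g ω = 0}) = 0) {ℓ M : ℝ} (hℓ : 0 < ℓ) :
    ({ω | ℓ < f ω} : Set Ω) ≤ᵐ[P]
      ({ω | M < g ω} ∪ ({ω | 0 < g ω} ∩ {ω | ℓ / M ≤ f ω / g ω}) : Set Ω) := by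
  filter_upwards [hg, measure_eq_zero_iff_ae_notMem.1 hfg] with ω hg0 hfg0 (hf : ℓ < f ω)
  rcases lt_or_ge M (g ω) with hMg | hgM
  · exact Or.inl hMg
  have hg_pos : 0 < g ω := hg0.lt_of_ne fun h => hfg0 ⟨hℓ.trans hf, h.symm⟩
  exact Or.inr ⟨hg_pos, div_le_div₀ (hℓ.trans hf).le hf.le hg_pos hgM⟩

theorem bounded_of_numeraire_exists_general
    (P : Measure Ω) [IsProbabilityMeasure P]
    (C : Set (Ω → ℝ)) (hC : C ⊆ L0plus P)
    (hex : ∃ g ∈ C, IsNumeraire P C g) :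
    BoundedInProb P C := by
  obtain ⟨g, hgC, hpos, Q, ⟨hQ, hQP, hPQ⟩, hbound⟩ := hex
  refine boundedInProb_of_forall_eventually fun ε hε => ?_
  obtain ⟨δ, hδ, hPδ⟩ := Measure.AbsolutelyContinuous.exists_pos_measure_lt_of_measure_lt hPQ
    (ENNReal.half_pos hε.ne').ne'
  obtain ⟨M, hgM, hM⟩ : ∃ M, P {ω | M < g ω} ≤ ε / 2 ∧ 0 < M :=
    (((tendsto_measure_setOf_lt_atTop (hC hgC).1).eventually
      (ge_mem_nhds (ENNReal.half_pos hε.ne'))).and (eventually_gt_atTop 0)).exists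
  have hinv : ∀ᶠ ℓ in atTop, (ENNReal.ofReal (ℓ / M))⁻¹ < δ :=
    (tendsto_inv_iff.2 (ENNReal.tendsto_ofReal_atTop.comp
      (tendsto_id.atTop_div_const hM))).eventually (gt_mem_nhds (by simpa using hδ))
  filter_upwards [hinv, eventually_gt_atTop 0] with ℓ hℓδ hℓ f hf
  have hratio : Q ({ω | 0 < g ω} ∩ {ω | ℓ / M ≤ f ω / g ω}) ≤ (ENNReal.ofReal (ℓ / M))⁻¹ :=
    measure_inter_setOf_le_le_inv_of_setLIntegral_le_one
      (((hC hf).1.mono_ac hQP).div ((hC hgC).1.mono_ac hQP)).restrict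
      ((hbound f hf).trans prob_le_one) (div_pos hℓ hM)
  calc P {ω | ℓ < f ω}
      ≤ P ({ω | M < g ω} ∪ ({ω | 0 < g ω} ∩ {ω | ℓ / M ≤ f ω / g ω})) :=
        measure_mono_ae (setOf_lt_ae_le_union (hC hgC).2 (hpos f hf) hℓ)
    _ ≤ ε / 2 + ε / 2 :=
        (measure_union_le _ _).trans (add_le_add hgM (hPδ _ (hratio.trans_lt hℓδ)).le)
    _ = ε := ENNReal.add_halves ε

/-- if a convex `C ⊆ L⁰₊` admits a numéraire, then `C` is bounded in
probability. -/
theorem bounded_of_numeraire_exists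
    (P : Measure Ω) [IsProbabilityMeasure P]
    (C : Set (Ω → ℝ)) (hC : C ⊆ L0plus P) (hconv : Convex ℝ C)
    (hex : ∃ g ∈ C, IsNumeraire P C g) :
    BoundedInProb P C :=
  bounded_of_numeraire_exists_general P C hC hex

end
end

section
/- Let C ⊆ L⁰₊ be convex and g ∈ C. If g is a numéraire of C, then g is maximal in C, i.e., g ∈ C^max. -/
open MeasureTheory Filter Set

noncomputable section

variable {Ω : Type*} [MeasurableSpace Ω]

/-- a numéraire `g` of `C` is maximal in `C`. -/
theorem maximal_of_numeraire
    (P : Measure Ω) [IsProbabilityMeasure P]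
    (C : Set (Ω → ℝ)) (hC : C ⊆ L0plus P) (hconv : Convex ℝ C)
    (g : Ω → ℝ) (hg : g ∈ C) (hnum : IsNumeraire P C g) :
    ∀ h ∈ C, g ≤ᵐ[P] h → g =ᵐ[P] h := by
  intro h hh hle
  obtain ⟨hsp, Q, ⟨hQprob, hQP, hPQ⟩, hineq⟩ := hnum
  set S : Set Ω := {ω | 0 < g ω} with hS
  have hgm : AEMeasurable g P := (hC hg).1
  have hhm : AEMeasurable h P := (hC hh).1
  have hgnn : 0 ≤ᵐ[P] g := (hC hg).2
  -- null measurability of S under Q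
  have hgmQ : AEMeasurable g Q := hgm.mono_ac hQP
  have hhmQ : AEMeasurable h Q := hhm.mono_ac hQP
  have hSnm : NullMeasurableSet S Q :=
    hgmQ.nullMeasurable measurableSet_Ioi
  -- a.e. Q, g ≤ h
  have hleQ : g ≤ᵐ[Q] h := hQP.ae_le hle
  -- constant 1 ≤ ofReal (h/g) on S
  have h1le : (fun _ => (1 : ENNReal)) ≤ᵐ[Q.restrict S] fun ω => ENNReal.ofReal (h ω / g ω) := by
    have := (ae_restrict_iff'₀ hSnm).2 (hleQ.mono (fun ω hω hωS => hωS))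
    refine ((ae_restrict_iff'₀ hSnm).2 ?_)
    filter_upwards [hleQ] with ω hω hωS
    have hgpos : 0 < g ω := hωS
    exact ENNReal.one_le_ofReal.2 ((le_div_iff₀ hgpos).2 (by linarith))
  have hfin : (∫⁻ _ in S, (1 : ENNReal) ∂Q) ≠ ⊤ := by
    rw [setLIntegral_one]
    exact (measure_lt_top Q S).ne
  have hintle : (∫⁻ ω in S, ENNReal.ofReal (h ω / g ω) ∂Q) ≤ ∫⁻ _ in S, (1 : ENNReal) ∂Q := by
    rw [setLIntegral_one]
    exact hineq h hh
  have hmeasofReal : AEMeasurable (fun ω => ENNReal.ofReal (h ω / g ω)) (Q.restrict S) :=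
    (ENNReal.measurable_ofReal.comp_aemeasurable ((hhmQ.div hgmQ).restrict))
  have heq1 : (fun _ => (1 : ENNReal)) =ᵐ[Q.restrict S] fun ω => ENNReal.ofReal (h ω / g ω) :=
    ae_eq_of_ae_le_of_lintegral_le h1le hfin hmeasofReal hintle
  -- hence h = g a.e. on S (under Q)
  have heqS : ∀ᵐ ω ∂Q, ω ∈ S → g ω = h ω := by
    have hres := (ae_restrict_iff'₀ hSnm).1 heq1
    filter_upwards [hres, hleQ] with ω hω hωle hωS
    have hgpos : 0 < g ω := hωS
    have h1 : ENNReal.ofReal (h ω / g ω) = ENNReal.ofReal 1 := by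
      rw [ENNReal.ofReal_one]; exact (hω hωS).symm
    have hdivnn : 0 ≤ h ω / g ω := div_nonneg (le_trans hgpos.le hωle) hgpos.le
    have : h ω / g ω = 1 := (ENNReal.ofReal_eq_ofReal_iff hdivnn zero_le_one).1 h1
    field_simp at this
    linarith
  -- on S, g = h a.e. under P
  have heqSP : ∀ᵐ ω ∂P, ω ∈ S → g ω = h ω := hPQ.ae_le heqS
  -- off S: g = 0 a.e. and h = 0 a.e.
  have hnullh : P ({ω | 0 < h ω} ∩ {ω | g ω = 0}) = 0 := hsp h hh
  have hnullae : ∀ᵐ ω ∂P, ¬ (0 < h ω ∧ g ω = 0) := by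
    have := measure_eq_zero_iff_ae_notMem.1 hnullh
    filter_upwards [this] with ω hω
    intro ⟨h1, h2⟩
    exact hω ⟨h1, h2⟩
  filter_upwards [heqSP, hgnn, hle, hnullae] with ω hωS hωnn hωle hωn
  by_cases hcase : 0 < g ω
  · exact hωS hcase
  · have hg0 : g ω = 0 := le_antisymm (not_lt.1 hcase) hωnn
    have hh0 : ¬ 0 < h ω := fun hpos => hωn ⟨hpos, hg0⟩
    have : h ω = 0 := le_antisymm (not_lt.1 hh0) (hg0 ▸ hωle)
    rw [hg0, this]


end
end

section
/- Let C ⊆ L⁰₊ be convex, let g ∈ C be strictly positive on C, and define C̃_g := { 1_{g=0} + 1_{g>0}·(f/g) : f ∈ C }. Then cs_1(C̃_g) = { 1_{g=0} + 1_{g>0}·(h/g) : h ∈ cs_g(C) }; in particular, cs_g(C) is bounded in probability if and only if cs_1(C̃_g) is bounded in probability. -/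
open MeasureTheory Filter Set

noncomputable section

variable {Ω : Type*} [MeasurableSpace Ω]

/-!
Dividing by `g` (and putting `1` on `{g = 0}`) is affine, turns the operation
`f ↦ (1 + δ) f - δ g` into `u ↦ (1 + δ) u - δ`, and is continuous in probability, being
multiplication by the a.s. finite `1_{g>0}/g`; on the random variables vanishing on `{g = 0}` it
is inverted by `u ↦ u g`. Strict positivity of `g` on `C` makes every element of `cs_g(C)`
vanish on `{g = 0}`. Hence the preimage of `cs_1(C̃_g)` lies in `CS_g(C)` and the image of
`cs_g(C)` lies in `CS_1(C̃_g)`, which gives the two inclusions by minimality. Boundedness in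
probability transfers since `u ≤ 1 + h/g` and `h = u g`, with `g` and `1/g` a.s. finite.
-/

open Topology
open scoped ENNReal

section General

variable {P : Measure Ω}

theorem tendsto_measure_lt_atTop [IsFiniteMeasure P] {w : Ω → ℝ} (hw : AEMeasurable w P) :
    Tendsto (fun M : ℝ => P {ω | M < w ω}) atTop (𝓝 0) := by
  have hempty : (⋂ M : ℝ, {ω | M < w ω}) = ∅ :=
    eq_empty_iff_forall_notMem.2 fun ω hω => lt_irrefl (w ω) (mem_iInter.1 hω (w ω))
  simpa [Function.comp_def, hempty] using
    tendsto_measure_iInter_atTop (μ := P) (fun M => nullMeasurableSet_lt aemeasurable_const hw)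
      (fun M N hMN ω (hω : N < w ω) => lt_of_le_of_lt hMN hω) ⟨0, measure_ne_top P _⟩

theorem MeasureTheory.TendstoInMeasure.mul_right [IsFiniteMeasure P] {f : ℕ → Ω → ℝ}
    {F w : Ω → ℝ} (hf : TendstoInMeasure P f atTop F) (hw : AEMeasurable w P) :
    TendstoInMeasure P (fun n ω => f n ω * w ω) atTop (fun ω => F ω * w ω) := by
  rw [tendstoInMeasure_iff_dist] at hf ⊢
  intro ε hε
  rw [ENNReal.tendsto_nhds_zero]
  intro η hη
  obtain ⟨M, hMη, hM⟩ := (((tendsto_measure_lt_atTop hw.abs).eventually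
    (eventually_le_nhds (ENNReal.half_pos hη.ne'))).and (eventually_gt_atTop 0)).exists
  filter_upwards [ENNReal.tendsto_nhds_zero.1 (hf (ε / M) (div_pos hε hM)) (η / 2)
    (ENNReal.half_pos hη.ne')] with n hn
  have hsub : {ω | ε ≤ dist (f n ω * w ω) (F ω * w ω)} ⊆
      {ω | ε / M ≤ dist (f n ω) (F ω)} ∪ {ω | M < |w ω|} := by
    intro ω (hω : ε ≤ dist (f n ω * w ω) (F ω * w ω))
    show ε / M ≤ dist (f n ω) (F ω) ∨ M < |w ω|
    by_contra! hcon
    rw [Real.dist_eq, ← sub_mul, abs_mul] at hω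
    rw [Real.dist_eq, lt_div_iff₀ hM] at hcon
    exact absurd (hω.trans (mul_le_mul_of_nonneg_left hcon.2 (abs_nonneg _))) (not_le.2 hcon.1)
  calc P {ω | ε ≤ dist (f n ω * w ω) (F ω * w ω)}
      ≤ P {ω | ε / M ≤ dist (f n ω) (F ω)} + P {ω | M < |w ω|} :=
        (measure_mono hsub).trans (measure_union_le _ _)
    _ ≤ η / 2 + η / 2 := add_le_add hn hMη
    _ = η := ENNReal.add_halves η

theorem ae_imp_eq_of_tendstoInMeasure {f : ℕ → Ω → ℝ} {F : Ω → ℝ} {p : Ω → Prop} {c : ℝ}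
    (hf : TendstoInMeasure P f atTop F) (hc : ∀ n, ∀ᵐ ω ∂P, p ω → f n ω = c) :
    ∀ᵐ ω ∂P, p ω → F ω = c := by
  obtain ⟨ns, -, hae⟩ := hf.exists_seq_tendsto_ae
  filter_upwards [hae, ae_all_iff.2 hc] with ω hlim hconst hp
  exact tendsto_nhds_unique hlim (tendsto_const_nhds.congr fun k => (hconst (ns k) hp).symm)

theorem ClosedInProb.mem_of_ae_eq {K : Set (Ω → ℝ)} (hK : ClosedInProb P K) {u v : Ω → ℝ}
    (hv : v ∈ K) (hu : AEMeasurable u P) (hvu : v =ᵐ[P] u) : u ∈ K := by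
  refine hK (fun _ => v) u (fun _ => hv) hu fun ε hε => ?_
  have hnull : P {ω | ε ≤ edist (v ω) (u ω)} = 0 := by
    refine measure_mono_null (fun ω (hω : ε ≤ edist (v ω) (u ω)) => ?_) (ae_iff.1 hvu)
    intro (heq : v ω = u ω)
    rw [heq, edist_self] at hω
    exact not_le.2 hε hω
  simp [hnull]

theorem BoundedInProb.of_ae_le_add_mul [IsFiniteMeasure P] {A B : Set (Ω → ℝ)} {w : Ω → ℝ}
    (hA : BoundedInProb P A) (hw : AEMeasurable w P) (hw₀ : 0 ≤ᵐ[P] w) (c : ℝ)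
    (hB : ∀ b ∈ B, ∃ a ∈ A, ∀ᵐ ω ∂P, b ω ≤ c + a ω * w ω) : BoundedInProb P B := by
  unfold BoundedInProb at hA ⊢
  rw [ENNReal.tendsto_nhds_zero] at hA ⊢
  intro ε hε
  obtain ⟨M, hMε, hM⟩ := (((tendsto_measure_lt_atTop hw).eventually
    (eventually_le_nhds (ENNReal.half_pos hε.ne'))).and (eventually_gt_atTop 0)).exists
  obtain ⟨L, hL⟩ := eventually_atTop.1 (hA (ε / 2) (ENNReal.half_pos hε.ne'))
  filter_upwards [eventually_ge_atTop (max c (c + L * M))] with ℓ hℓ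
  have hcℓ : c ≤ ℓ := (le_max_left _ _).trans hℓ
  have hLℓ : L ≤ (ℓ - c) / M := by
    rw [le_div_iff₀ hM]
    linarith [(le_max_right c (c + L * M)).trans hℓ]
  refine iSup₂_le fun b hb => ?_
  obtain ⟨a, ha, hba⟩ := hB b hb
  have hsub : {ω | ℓ < b ω} ≤ᵐ[P] ({ω | (ℓ - c) / M < a ω} ∪ {ω | M < w ω} : Set Ω) := by
    filter_upwards [hba, hw₀] with ω hbω (hwω : 0 ≤ w ω) (hω : ℓ < b ω)
    show (ℓ - c) / M < a ω ∨ M < w ω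
    by_contra! hcon
    rw [le_div_iff₀ hM] at hcon
    have haw : a ω * w ω ≤ ℓ - c := by
      rcases le_total (a ω) 0 with ha₀ | ha₀
      · linarith [mul_nonpos_of_nonpos_of_nonneg ha₀ hwω]
      · exact (mul_le_mul_of_nonneg_left hcon.2 ha₀).trans hcon.1
    linarith
  calc P {ω | ℓ < b ω} ≤ P {ω | (ℓ - c) / M < a ω} + P {ω | M < w ω} :=
        (measure_mono_ae hsub).trans (measure_union_le _ _)
    _ ≤ ε / 2 + ε / 2 :=
        add_le_add ((le_iSup₂ (f := fun a (_ : a ∈ A) => P {ω | (ℓ - c) / M < a ω}) a ha).trans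
          (hL _ hLℓ)) hMε
    _ = ε := ENNReal.add_halves ε

theorem convex_L0plus : Convex ℝ (L0plus P) := by
  intro f hf f' hf' a b ha hb _
  refine ⟨(hf.1.const_smul a).add (hf'.1.const_smul b), ?_⟩
  filter_upwards [hf.2, hf'.2] with ω h h'
  exact add_nonneg (mul_nonneg ha h) (mul_nonneg hb h')

theorem closedInProb_L0plus : ClosedInProb P (L0plus P) := by
  intro f F hf hF hfF
  refine ⟨hF, ?_⟩
  obtain ⟨ns, -, hae⟩ := hfF.exists_seq_tendsto_ae
  filter_upwards [hae, ae_all_iff.2 fun n => (hf n).2] with ω hlim hnn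
  exact ge_of_tendsto' hlim fun k => hnn (ns k)

end General

section CSclass

variable {P : Measure Ω} {C : Set (Ω → ℝ)} {g : Ω → ℝ}

theorem subset_csSet : C ⊆ csSet P C g := fun _ hf =>
  mem_iInter₂.2 fun _ hK => hK.2.1 hf

theorem csSet_subset_of_mem {K : Set (Ω → ℝ)} (hK : K ∈ CSclass P C g) : csSet P C g ⊆ K :=
  fun _ hf => mem_iInter₂.1 hf K hK

theorem csSet_mem_CSclass (hC : C ⊆ L0plus P) : csSet P C g ∈ CSclass P C g := by
  refine ⟨csSet_subset_of_mem ⟨subset_rfl, hC, convex_L0plus, closedInProb_L0plus,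
    fun _ _ _ _ h => h⟩, subset_csSet, convex_iInter₂ fun K hK => hK.2.2.1, ?_, ?_⟩
  · exact fun f F hf hF hfF => mem_iInter₂.2 fun K hK =>
      hK.2.2.2.1 f F (fun n => mem_iInter₂.1 (hf n) K hK) hF hfF
  · exact fun f hf δ hδ hmem => mem_iInter₂.2 fun K hK =>
      hK.2.2.2.2 f (mem_iInter₂.1 hf K hK) δ hδ hmem

theorem ae_eq_zero_of_strictlyPositiveOn (hsp : StrictlyPositiveOn P C g) {f : Ω → ℝ}
    (hfC : f ∈ C) (hf : f ∈ L0plus P) : ∀ᵐ ω ∂P, g ω = 0 → f ω = 0 := by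
  filter_upwards [measure_eq_zero_iff_ae_notMem.1 (hsp f hfC), hf.2] with ω hω hnn hg0
  exact le_antisymm (not_lt.1 fun hpos => hω ⟨hpos, hg0⟩) hnn

theorem csSet_ae_eq_zero (hC : C ⊆ L0plus P) (hsp : StrictlyPositiveOn P C g) {h : Ω → ℝ}
    (hh : h ∈ csSet P C g) : ∀ᵐ ω ∂P, g ω = 0 → h ω = 0 := by
  suffices {h | h ∈ L0plus P ∧ ∀ᵐ ω ∂P, g ω = 0 → h ω = 0} ∈ CSclass P C g from
    (csSet_subset_of_mem this hh).2
  refine ⟨fun _ h => h.1, fun f hf => ⟨hC hf, ae_eq_zero_of_strictlyPositiveOn hsp hf (hC hf)⟩,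
    ?_, ?_, ?_⟩
  · rintro x ⟨hx, hx0⟩ y ⟨hy, hy0⟩ a b ha hb hab
    refine ⟨convex_L0plus hx hy ha hb hab, ?_⟩
    filter_upwards [hx0, hy0] with ω h h' hg0
    simp [h hg0, h' hg0]
  · exact fun f F hf hF hfF => ⟨closedInProb_L0plus f F (fun n => (hf n).1) hF hfF,
      ae_imp_eq_of_tendstoInMeasure hfF fun n => (hf n).2⟩
  · rintro f ⟨-, hf0⟩ δ - hmem
    refine ⟨hmem, ?_⟩
    filter_upwards [hf0] with ω h hg0
    simp [h hg0, hg0]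

end CSclass

section InUnitsOf

variable {α : Type*}

def inUnitsOf (g h : α → ℝ) : α → ℝ := fun x => if g x = 0 then 1 else h x / g x

theorem inUnitsOf_affine (g h h' : α → ℝ) {a b : ℝ} (hab : a + b = 1) :
    inUnitsOf g (a • h + b • h') = a • inUnitsOf g h + b • inUnitsOf g h' := by
  funext x
  by_cases hg0 : g x = 0
  · simp [inUnitsOf, hg0, hab]
  · simp only [inUnitsOf, hg0, if_false, Pi.add_apply, Pi.smul_apply, smul_eq_mul]
    ring

theorem inUnitsOf_one_add_mul_sub (g h : α → ℝ) (δ : ℝ) :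
    inUnitsOf g (fun x => (1 + δ) * h x - δ * g x) =
      fun x => (1 + δ) * inUnitsOf g h x - δ * 1 := by
  funext x
  by_cases hg0 : g x = 0
  · simp only [inUnitsOf, hg0, if_true]
    ring
  · simp only [inUnitsOf, hg0, if_false]
    field_simp

theorem inUnitsOf_le (g h : α → ℝ) (x : α) : inUnitsOf g h x ≤ 1 + h x * (g x)⁻¹ := by
  by_cases hg0 : g x = 0
  · simp [inUnitsOf, hg0]
  · simp [inUnitsOf, hg0, div_eq_mul_inv]

theorem dist_inUnitsOf (g h h' : α → ℝ) (x : α) :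
    dist (inUnitsOf g h x) (inUnitsOf g h' x) = dist (h x * (g x)⁻¹) (h' x * (g x)⁻¹) := by
  by_cases hg0 : g x = 0 <;> simp [inUnitsOf, hg0, div_eq_mul_inv]

end InUnitsOf

section Transform

variable {P : Measure Ω} {g : Ω → ℝ}

theorem aemeasurable_inUnitsOf {h : Ω → ℝ} (hg : AEMeasurable g P) (hh : AEMeasurable h P) :
    AEMeasurable (inUnitsOf g h) P := by
  obtain ⟨g₀, hg₀, hgg₀⟩ := hg
  obtain ⟨h₀, hh₀, hhh₀⟩ := hh
  refine ⟨inUnitsOf g₀ h₀,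
    Measurable.ite (hg₀ (measurableSet_singleton 0)) measurable_const (hh₀.div hg₀), ?_⟩
  filter_upwards [hgg₀, hhh₀] with ω e e'
  simp only [inUnitsOf, e, e']

theorem inUnitsOf_mem_L0plus {h : Ω → ℝ} (hg : g ∈ L0plus P) (hh : h ∈ L0plus P) :
    inUnitsOf g h ∈ L0plus P := by
  refine ⟨aemeasurable_inUnitsOf hg.1 hh.1, ?_⟩
  filter_upwards [hg.2, hh.2] with ω (hgω : 0 ≤ g ω) (hhω : 0 ≤ h ω)
  by_cases hg0 : g ω = 0
  · simp [inUnitsOf, hg0]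
  · simpa [inUnitsOf, hg0] using div_nonneg hhω hgω

theorem MeasureTheory.TendstoInMeasure.inUnitsOf [IsFiniteMeasure P] {f : ℕ → Ω → ℝ}
    {F : Ω → ℝ} (hf : TendstoInMeasure P f atTop F) (hg : AEMeasurable g P) :
    TendstoInMeasure P (fun n => inUnitsOf g (f n)) atTop (inUnitsOf g F) := by
  have hmul := hf.mul_right hg.inv
  rw [tendstoInMeasure_iff_dist] at hmul ⊢
  simpa only [dist_inUnitsOf, Pi.inv_apply] using hmul

theorem inUnitsOf_mul_ae_eq {h : Ω → ℝ} (hh : ∀ᵐ ω ∂P, g ω = 0 → h ω = 0) :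
    (fun ω => inUnitsOf g h ω * g ω) =ᵐ[P] h := by
  filter_upwards [hh] with ω hω
  by_cases hg0 : g ω = 0
  · simp [hg0, hω hg0]
  · simp [inUnitsOf, hg0]

theorem ae_eq_inUnitsOf_mul {u : Ω → ℝ} (hu : ∀ᵐ ω ∂P, g ω = 0 → u ω = 1) :
    u =ᵐ[P] inUnitsOf g (fun ω => u ω * g ω) := by
  filter_upwards [hu] with ω hω
  by_cases hg0 : g ω = 0
  · simp [inUnitsOf, hg0, hω hg0]
  · simp [inUnitsOf, hg0]

variable {C : Set (Ω → ℝ)}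

theorem image_inUnitsOf_subset_L0plus (hC : C ⊆ L0plus P) (hg : g ∈ C) :
    inUnitsOf g '' C ⊆ L0plus P := by
  rintro _ ⟨f, hf, rfl⟩
  exact inUnitsOf_mem_L0plus (hC hg) (hC hf)

theorem inUnitsOf_mem_csSet [IsFiniteMeasure P] (hC : C ⊆ L0plus P) (hg : g ∈ C)
    {h : Ω → ℝ} (hh : h ∈ csSet P C g) :
    inUnitsOf g h ∈ csSet P (inUnitsOf g '' C) (fun _ => 1) := by
  have hgP := hC hg
  have hE := csSet_mem_CSclass (g := fun _ => (1 : ℝ)) (image_inUnitsOf_subset_L0plus hC hg)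
  suffices {h | h ∈ L0plus P ∧ inUnitsOf g h ∈ csSet P (inUnitsOf g '' C) (fun _ => 1)} ∈
      CSclass P C g from (csSet_subset_of_mem this hh).2
  refine ⟨fun _ h => h.1, fun f hf => ⟨hC hf, subset_csSet (mem_image_of_mem _ hf)⟩,
    ?_, ?_, ?_⟩
  · rintro x ⟨hx, hxE⟩ y ⟨hy, hyE⟩ a b ha hb hab
    refine ⟨convex_L0plus hx hy ha hb hab, ?_⟩
    rw [inUnitsOf_affine g x y hab]
    exact hE.2.2.1 hxE hyE ha hb hab
  · exact fun f F hf hF hfF => ⟨closedInProb_L0plus f F (fun n => (hf n).1) hF hfF,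
      hE.2.2.2.1 _ _ (fun n => (hf n).2) (aemeasurable_inUnitsOf hgP.1 hF) (hfF.inUnitsOf hgP.1)⟩
  · rintro f ⟨-, hfE⟩ δ hδ hmem
    refine ⟨hmem, ?_⟩
    have hmemE := inUnitsOf_mem_L0plus hgP hmem
    rw [inUnitsOf_one_add_mul_sub] at hmemE ⊢
    exact hE.2.2.2.2 _ hfE δ hδ hmemE

theorem mul_mem_csSet_of_mem_csSet_inUnitsOf [IsFiniteMeasure P] (hC : C ⊆ L0plus P)
    (hg : g ∈ C) (hsp : StrictlyPositiveOn P C g) {u : Ω → ℝ}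
    (hu : u ∈ csSet P (inUnitsOf g '' C) (fun _ => 1)) :
    (∀ᵐ ω ∂P, g ω = 0 → u ω = 1) ∧ (fun ω => u ω * g ω) ∈ csSet P C g := by
  have hgP := hC hg
  have hD := csSet_mem_CSclass (g := g) hC
  suffices {u | u ∈ L0plus P ∧ (∀ᵐ ω ∂P, g ω = 0 → u ω = 1) ∧
      (fun ω => u ω * g ω) ∈ csSet P C g} ∈ CSclass P (inUnitsOf g '' C) (fun _ => 1) from
    (csSet_subset_of_mem this hu).2
  refine ⟨fun _ h => h.1, ?_, ?_, ?_, ?_⟩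
  · rintro _ ⟨f, hf, rfl⟩
    refine ⟨inUnitsOf_mem_L0plus hgP (hC hf), ae_of_all _ fun ω hg0 => if_pos hg0, ?_⟩
    exact hD.2.2.2.1.mem_of_ae_eq (subset_csSet hf)
      ((aemeasurable_inUnitsOf hgP.1 (hC hf).1).mul hgP.1)
      (inUnitsOf_mul_ae_eq (ae_eq_zero_of_strictlyPositiveOn hsp hf (hC hf))).symm
  · rintro x ⟨hx, hx1, hxD⟩ y ⟨hy, hy1, hyD⟩ a b ha hb hab
    refine ⟨convex_L0plus hx hy ha hb hab, ?_, ?_⟩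
    · filter_upwards [hx1, hy1] with ω h h' hg0
      simp [h hg0, h' hg0, hab]
    · convert hD.2.2.1 hxD hyD ha hb hab using 1
      funext ω
      simp only [Pi.add_apply, Pi.smul_apply, smul_eq_mul]
      ring
  · exact fun u U hu hU huU => ⟨closedInProb_L0plus u U (fun n => (hu n).1) hU huU,
      ae_imp_eq_of_tendstoInMeasure huU fun n => (hu n).2.1,
      hD.2.2.2.1 _ _ (fun n => (hu n).2.2) (hU.mul hgP.1) (huU.mul_right hgP.1)⟩
  · rintro u ⟨-, hu1, huD⟩ δ hδ hmem
    refine ⟨hmem, ?_, ?_⟩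
    · filter_upwards [hu1] with ω h hg0
      simp [h hg0]
    · have hrw : (fun ω => ((1 + δ) * u ω - δ * 1) * g ω) =
          fun ω => (1 + δ) * (u ω * g ω) - δ * g ω := by
        funext ω
        ring
      rw [hrw]
      refine hD.2.2.2.2 _ huD δ hδ ?_
      rw [← hrw]
      refine ⟨hmem.1.mul hgP.1, ?_⟩
      filter_upwards [hmem.2, hgP.2] with ω h h'
      exact mul_nonneg h h'

end Transform

theorem csSet_transform_general
    (P : Measure Ω) [IsProbabilityMeasure P]
    (C : Set (Ω → ℝ)) (hC : C ⊆ L0plus P)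
    (g : Ω → ℝ) (hg : g ∈ C) (hsp : StrictlyPositiveOn P C g) :
    (∀ u : Ω → ℝ,
      u ∈ csSet P ((fun f : Ω → ℝ => fun ω => if g ω = 0 then 1 else f ω / g ω) '' C)
            (fun _ => (1 : ℝ)) ↔
        ∃ h ∈ csSet P C g, u =ᵐ[P] fun ω => if g ω = 0 then 1 else h ω / g ω) ∧
    (BoundedInProb P (csSet P C g) ↔
      BoundedInProb P
        (csSet P ((fun f : Ω → ℝ => fun ω => if g ω = 0 then 1 else f ω / g ω) '' C)
          (fun _ => (1 : ℝ)))) := by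
  change (∀ u, u ∈ csSet P (inUnitsOf g '' C) _ ↔ ∃ h ∈ csSet P C g, u =ᵐ[P] inUnitsOf g h) ∧
    (BoundedInProb P (csSet P C g) ↔ BoundedInProb P (csSet P (inUnitsOf g '' C) _))
  have hgP := hC hg
  have hE := csSet_mem_CSclass (g := fun _ => (1 : ℝ)) (image_inUnitsOf_subset_L0plus hC hg)
  have hiff : ∀ u, u ∈ csSet P (inUnitsOf g '' C) (fun _ => 1) ↔
      ∃ h ∈ csSet P C g, u =ᵐ[P] inUnitsOf g h := by
    refine fun u => ⟨fun hu => ?_, fun ⟨h, hh, hu⟩ => ?_⟩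
    · obtain ⟨hu1, huD⟩ := mul_mem_csSet_of_mem_csSet_inUnitsOf hC hg hsp hu
      exact ⟨_, huD, ae_eq_inUnitsOf_mul hu1⟩
    · have hhm := ((csSet_mem_CSclass hC).1 hh).1
      exact hE.2.2.2.1.mem_of_ae_eq (inUnitsOf_mem_csSet hC hg hh)
        ((aemeasurable_inUnitsOf hgP.1 hhm).congr hu.symm) hu.symm
  refine ⟨hiff, fun hD => ?_, fun hE => ?_⟩
  · refine hD.of_ae_le_add_mul hgP.1.inv ?_ 1 fun u hu => ?_
    · filter_upwards [hgP.2] with ω hω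
      exact inv_nonneg.2 hω
    obtain ⟨h, hh, hu⟩ := (hiff u).1 hu
    exact ⟨h, hh, by filter_upwards [hu] with ω e; rw [e]; exact inUnitsOf_le g h ω⟩
  · refine hE.of_ae_le_add_mul hgP.1 hgP.2 0 fun h hh =>
      ⟨inUnitsOf g h, inUnitsOf_mem_csSet hC hg hh, ?_⟩
    filter_upwards [inUnitsOf_mul_ae_eq (csSet_ae_eq_zero hC hsp hh)] with ω e
    rw [zero_add, e]

/-- with `C̃_g := { 1_{g=0} + 1_{g>0}(f/g) : f ∈ C }`, one has (as sets of
equivalence classes) `cs_1(C̃_g) = { 1_{g=0} + 1_{g>0}(h/g) : h ∈ cs_g(C) }`; in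
particular `cs_g(C)` is bounded iff `cs_1(C̃_g)` is bounded. -/
theorem csSet_transform
    (P : Measure Ω) [IsProbabilityMeasure P]
    (C : Set (Ω → ℝ)) (hC : C ⊆ L0plus P) (hconv : Convex ℝ C)
    (g : Ω → ℝ) (hg : g ∈ C) (hsp : StrictlyPositiveOn P C g) :
    (∀ u : Ω → ℝ,
      u ∈ csSet P ((fun f : Ω → ℝ => fun ω => if g ω = 0 then 1 else f ω / g ω) '' C)
            (fun _ => (1 : ℝ)) ↔
        ∃ h ∈ csSet P C g, u =ᵐ[P] fun ω => if g ω = 0 then 1 else h ω / g ω) ∧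
    (BoundedInProb P (csSet P C g) ↔
      BoundedInProb P
        (csSet P ((fun f : Ω → ℝ => fun ω => if g ω = 0 then 1 else f ω / g ω) '' C)
          (fun _ => (1 : ℝ)))) :=
  csSet_transform_general P C hC g hg hsp

end
end

section
/- Let C ⊆ L⁰₊ be convex with 1 ∈ C strictly positive on C, and suppose cs_1(C) is bounded in probability. Then 1 is maximal in cs_1(C): if f ∈ cs_1(C) satisfies f ≥ 1 a.s., then f = 1 a.s. -/
open MeasureTheory Filter Set

noncomputable section

variable {Ω : Type*} [MeasurableSpace Ω]

/-! A nontrivial excess `P[f > 1 + c] > 0` of an element `f ≥ 1` of `cs_1(C)` is amplified by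
(CS3): every `(1+δ)f − δ = f + δ(f − 1)` lies in `cs_1(C)` and exceeds `δc` with probability at
least `P[f > 1 + c]`, which contradicts boundedness in probability as `δ → ∞`. -/

theorem BoundedInProb.eventually_forall_measure_lt {P : Measure Ω} {A : Set (Ω → ℝ)}
    (hA : BoundedInProb P A) {ε : ENNReal} (hε : 0 < ε) :
    ∀ᶠ ℓ in atTop, ∀ h ∈ A, P {ω | ℓ < h ω} < ε := by
  filter_upwards [hA.eventually_lt_const hε] with ℓ hℓ h hh
  exact (le_biSup (fun h : Ω → ℝ => P {ω | ℓ < h ω}) hh).trans_lt hℓ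

theorem not_boundedInProb_univ (P : Measure Ω) [NeZero P] : ¬ BoundedInProb P univ := by
  intro hb
  obtain ⟨ℓ, hℓ⟩ :=
    (hb.eventually_forall_measure_lt (Measure.measure_univ_pos.2 (NeZero.ne P))).exists
  simpa using hℓ (fun _ => ℓ + 1) (mem_univ _)

/-- If `CS_g(C)` is empty then `cs_g(C)` is everything, which is unbounded. -/
theorem csSet_subset_L0plus_of_boundedInProb {P : Measure Ω} [NeZero P] {C : Set (Ω → ℝ)}
    {g : Ω → ℝ} (hb : BoundedInProb P (csSet P C g)) : csSet P C g ⊆ L0plus P := by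
  rcases (CSclass P C g).eq_empty_or_nonempty with hempty | ⟨K, hK⟩
  · simp only [csSet, hempty, mem_empty_iff_false, iInter_of_empty, iInter_univ] at hb
    exact absurd hb (not_boundedInProb_univ P)
  · exact (biInter_subset_of_mem hK).trans hK.1

theorem extrapolate_mem_csSet {P : Measure Ω} {C : Set (Ω → ℝ)} {g f : Ω → ℝ}
    (hf : f ∈ csSet P C g) {δ : ℝ} (hδ : 0 ≤ δ)
    (hL0 : (fun ω => (1 + δ) * f ω - δ * g ω) ∈ L0plus P) :
    (fun ω => (1 + δ) * f ω - δ * g ω) ∈ csSet P C g :=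
  mem_iInter₂.2 fun K hK => hK.2.2.2.2 f (mem_iInter₂.1 hf K hK) δ hδ hL0

theorem extrapolate_mem_L0plus {P : Measure Ω} {f : Ω → ℝ} (hf : AEMeasurable f P)
    (hge : (fun _ => (1 : ℝ)) ≤ᵐ[P] f) {δ : ℝ} (hδ : 0 ≤ δ) :
    (fun ω => (1 + δ) * f ω - δ * 1) ∈ L0plus P := by
  refine ⟨(hf.const_mul _).sub aemeasurable_const, ?_⟩
  filter_upwards [hge] with ω hω
  simp only [Pi.zero_apply]
  nlinarith

theorem exists_pos_measure_add_lt_ne_zero {μ : Measure Ω} {f g : Ω → ℝ} (hle : g ≤ᵐ[μ] f)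
    (hne : ¬ f =ᵐ[μ] g) : ∃ c : ℝ, 0 < c ∧ μ {ω | g ω + c < f ω} ≠ 0 := by
  have hlt : μ {ω | g ω < f ω} ≠ 0 := by
    intro h0
    have hfg : f ≤ᵐ[μ] g := (measure_eq_zero_iff_ae_notMem.1 h0).mono fun _ h => not_lt.1 h
    exact hne (hfg.antisymm hle)
  have hunion : {ω | g ω < f ω} = ⋃ n : ℕ, {ω | g ω + 1 / ((n : ℝ) + 1) < f ω} := by
    ext ω
    simp only [mem_ofPred_eq, mem_iUnion]
    refine ⟨fun h => ?_, fun ⟨n, hn⟩ => (le_add_of_nonneg_right (by positivity)).trans_lt hn⟩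
    obtain ⟨n, hn⟩ := exists_nat_one_div_lt (sub_pos.2 h)
    exact ⟨n, by linarith⟩
  rw [hunion, Ne, measure_iUnion_null_iff] at hlt
  push Not at hlt
  obtain ⟨n, hn⟩ := hlt
  exact ⟨_, by positivity, hn⟩

theorem not_boundedInProb_of_extrapolate_mem {P : Measure Ω} {A : Set (Ω → ℝ)} {f : Ω → ℝ}
    (hA : ∀ δ : ℝ, 0 ≤ δ → (fun ω => (1 + δ) * f ω - δ * 1) ∈ A) {c : ℝ} (hc : 0 < c)
    (hf : P {ω | 1 + c < f ω} ≠ 0) : ¬ BoundedInProb P A := by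
  intro hb
  obtain ⟨ℓ, hℓ⟩ := (hb.eventually_forall_measure_lt (pos_iff_ne_zero.2 hf)).exists
  set δ := max 0 (ℓ / c)
  have hδ : 0 ≤ δ := le_max_left _ _
  have hℓδ : ℓ ≤ δ * c := (div_le_iff₀ hc).1 (le_max_right _ _)
  refine (hℓ _ (hA δ hδ)).not_ge (measure_mono fun ω (hω : 1 + c < f ω) => ?_)
  show ℓ < (1 + δ) * f ω - δ * 1
  nlinarith [mul_le_mul_of_nonneg_left (by linarith : c ≤ f ω - 1) hδ]

theorem one_maximal_in_csSet_general
    (P : Measure Ω) [IsProbabilityMeasure P]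
    (C : Set (Ω → ℝ))
    (hb : BoundedInProb P (csSet P C (fun _ => (1 : ℝ)))) :
    ∀ f ∈ csSet P C (fun _ => (1 : ℝ)),
      (fun _ => (1 : ℝ)) ≤ᵐ[P] f → f =ᵐ[P] (fun _ => (1 : ℝ)) := by
  intro f hf hge
  by_contra hne
  have hfm : AEMeasurable f P := (csSet_subset_L0plus_of_boundedInProb hb hf).1
  obtain ⟨c, hc, hexcess⟩ := exists_pos_measure_add_lt_ne_zero hge hne
  exact not_boundedInProb_of_extrapolate_mem
    (fun δ hδ => extrapolate_mem_csSet hf hδ (extrapolate_mem_L0plus hfm hge hδ)) hc hexcess hb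

/-- if `1 ∈ C` and `cs_1(C)` is bounded in probability, then `1` is maximal
in `cs_1(C)`. -/
theorem one_maximal_in_csSet
    (P : Measure Ω) [IsProbabilityMeasure P]
    (C : Set (Ω → ℝ)) (hC : C ⊆ L0plus P) (hconv : Convex ℝ C)
    (h1 : (fun _ => (1 : ℝ)) ∈ C)
    (hb : BoundedInProb P (csSet P C (fun _ => (1 : ℝ)))) :
    ∀ f ∈ csSet P C (fun _ => (1 : ℝ)),
      (fun _ => (1 : ℝ)) ≤ᵐ[P] f → f =ᵐ[P] (fun _ => (1 : ℝ)) :=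
  one_maximal_in_csSet_general P C hb

end
end

section
/- Let K ⊆ L⁰₊ be convex, closed in probability, and bounded in probability. Then its solid hull S := { f ∈ L⁰₊ : 0 ≤ f ≤ h a.s. for some h ∈ K } is convex, bounded in probability, and closed in probability. -/
open MeasureTheory Filter Set

noncomputable section

variable {Ω : Type*} [MeasurableSpace Ω]

/-!
Convexity and boundedness pass directly from `K` to its solid hull. For closedness, let
`f n ≤ x n` with `x n ∈ K` and `f n → g` in probability, almost surely along a subsequence.
By a lemma of Delbaen and Schachermayer, forward convex combinations `k j` of the `x n`
converge almost surely to some `h`, which lies in `K` because `K` is convex and closed. The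
same convex combinations of the `f n` lie below the `k j` and still converge to `g`, so
`g ≤ h`.

The Delbaen–Schachermayer lemma comes from maximising the strictly concave functional
`v ↦ E[1 - e^{-v}]` over the tails `conv {x n | n ≥ j}`: near-maximisers are Cauchy in
probability, since the concavity of `1 - e^{-x}` degenerates only where `x` is large, which
boundedness of `K` makes improbable.
-/

open scoped ENNReal Topology

theorem tendsto_of_mem_convexHull_tail {E : Type*} [AddCommGroup E] [Module ℝ E]
    [TopologicalSpace E] [LocallyConvexSpace ℝ E] {x y : ℕ → E} {c : E}
    (hx : Tendsto x atTop (𝓝 c)) (hy : ∀ j, y j ∈ convexHull ℝ (x '' Ici j)) :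
    Tendsto y atTop (𝓝 c) := by
  refine (LocallyConvexSpace.convex_basis (𝕜 := ℝ) c).tendsto_right_iff.mpr ?_
  rintro s ⟨hs, hconv⟩
  obtain ⟨N, hN⟩ := eventually_atTop.mp (hx hs)
  refine eventually_atTop.mpr ⟨N, fun j hj => convexHull_min ?_ hconv (hy j)⟩
  rintro _ ⟨n, hn, rfl⟩
  exact hN n (hj.trans hn)

theorem apply_mem_convexHull_image {ι Ω : Type*} {f : ι → Ω → ℝ} {s : Set ι} {φ : Ω → ℝ}
    (hφ : φ ∈ convexHull ℝ (f '' s)) (ω : Ω) :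
    φ ω ∈ convexHull ℝ ((fun i => f i ω) '' s) := by
  have := mem_image_of_mem (LinearMap.proj (R := ℝ) (φ := fun _ : Ω => ℝ) ω) hφ
  rwa [LinearMap.image_convexHull, image_image] at this

theorem convex_setOf_snd_ae_le_fst (P : Measure Ω) :
    Convex ℝ {q : (Ω → ℝ) × (Ω → ℝ) | q.2 ≤ᵐ[P] q.1} := by
  intro q hq r hr s t hs ht _
  show _ ≤ᵐ[P] _
  filter_upwards [hq, hr] with ω hqω hrω
  simp only [Prod.smul_fst, Prod.smul_snd, Prod.fst_add, Prod.snd_add, Pi.add_apply,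
    Pi.smul_apply, smul_eq_mul]
  gcongr

theorem exists_mem_convexHull_ae_le {ι : Type*} {P : Measure Ω} {x y : ι → Ω → ℝ}
    (hyx : ∀ i, y i ≤ᵐ[P] x i) {s : Set ι} {k : Ω → ℝ} (hk : k ∈ convexHull ℝ (x '' s)) :
    ∃ φ ∈ convexHull ℝ (y '' s), φ ≤ᵐ[P] k := by
  set p : ι → (Ω → ℝ) × (Ω → ℝ) := fun i => (x i, y i)
  have hfst : k ∈ LinearMap.fst ℝ _ _ '' convexHull ℝ (p '' s) := by
    rwa [LinearMap.image_convexHull, image_image]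
  obtain ⟨z, hz, rfl⟩ := hfst
  refine ⟨z.2, ?_, convexHull_min ?_ (convex_setOf_snd_ae_le_fst P) hz⟩
  · have := mem_image_of_mem (LinearMap.snd ℝ (Ω → ℝ) (Ω → ℝ)) hz
    rwa [LinearMap.image_convexHull, image_image] at this
  · rintro _ ⟨i, -, rfl⟩
    exact hyx i

def expUtility (x : ℝ) : ℝ := 1 - Real.exp (-x)

theorem continuous_expUtility : Continuous expUtility := by
  unfold expUtility; fun_prop

theorem expUtility_nonneg {x : ℝ} (hx : 0 ≤ x) : 0 ≤ expUtility x := by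
  simpa [expUtility] using hx

theorem expUtility_le_one (x : ℝ) : expUtility x ≤ 1 := by
  simp [expUtility, (Real.exp_pos _).le]

theorem expUtility_midpoint_sub_average (x y : ℝ) :
    expUtility ((x + y) / 2) - (expUtility x + expUtility y) / 2
      = (Real.exp (-(x / 2)) - Real.exp (-(y / 2))) ^ 2 / 2 := by
  have hx : Real.exp (-x) = Real.exp (-(x / 2)) ^ 2 := by rw [← Real.exp_nat_mul]; ring_nf
  have hy : Real.exp (-y) = Real.exp (-(y / 2)) ^ 2 := by rw [← Real.exp_nat_mul]; ring_nf
  have hxy : Real.exp (-((x + y) / 2)) = Real.exp (-(x / 2)) * Real.exp (-(y / 2)) := by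
    rw [← Real.exp_add]; ring_nf
  simp only [expUtility, hx, hy, hxy]
  ring

theorem expUtility_average_le_midpoint (x y : ℝ) :
    (expUtility x + expUtility y) / 2 ≤ expUtility ((x + y) / 2) := by
  have := expUtility_midpoint_sub_average x y
  nlinarith [sq_nonneg (Real.exp (-(x / 2)) - Real.exp (-(y / 2)))]

theorem exp_neg_half_sub_exp_neg_half_ge {ε M x y : ℝ} (hε : 0 ≤ ε) (hxM : x ≤ M)
    (hxy : x + ε ≤ y) :
    Real.exp (-(M / 2)) * (1 - Real.exp (-(ε / 2))) ≤
      Real.exp (-(x / 2)) - Real.exp (-(y / 2)) := by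
  have hy : Real.exp (-(y / 2)) ≤ Real.exp (-(x / 2)) * Real.exp (-(ε / 2)) := by
    rw [← Real.exp_add]; exact Real.exp_le_exp.mpr (by linarith)
  have hM : Real.exp (-(M / 2)) ≤ Real.exp (-(x / 2)) := Real.exp_le_exp.mpr (by linarith)
  have hd : 0 ≤ 1 - Real.exp (-(ε / 2)) := sub_nonneg.mpr (Real.exp_le_one_iff.mpr (by linarith))
  nlinarith

theorem exists_expUtility_midpoint_gap {ε : ℝ} (hε : 0 < ε) (M : ℝ) :
    ∃ δ > 0, ∀ x y, x ≤ M → y ≤ M → ε ≤ |x - y| →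
      δ ≤ expUtility ((x + y) / 2) - (expUtility x + expUtility y) / 2 := by
  set c := Real.exp (-(M / 2)) * (1 - Real.exp (-(ε / 2)))
  have hc : 0 < c := mul_pos (Real.exp_pos _) (by simpa using hε)
  refine ⟨c ^ 2 / 2, by positivity, fun x y hx hy hxy => ?_⟩
  have hcab : c ≤ |Real.exp (-(x / 2)) - Real.exp (-(y / 2))| := by
    rcases le_total x y with h | h
    · rw [abs_sub_comm, abs_of_nonneg (by linarith)] at hxy
      exact (exp_neg_half_sub_exp_neg_half_ge hε.le hx (by linarith)).trans (le_abs_self _)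
    · rw [abs_of_nonneg (by linarith)] at hxy
      rw [abs_sub_comm]
      exact (exp_neg_half_sub_exp_neg_half_ge hε.le hy (by linarith)).trans (le_abs_self _)
  rw [expUtility_midpoint_sub_average, ← sq_abs (_ - _)]
  gcongr

section ExpectedUtility

variable {P : Measure Ω}

def expectedExpUtility (P : Measure Ω) (v : Ω → ℝ) : ℝ := ∫ ω, expUtility (v ω) ∂P

theorem integrable_expUtility_comp [IsFiniteMeasure P] {v : Ω → ℝ} (hv : v ∈ L0plus P) :
    Integrable (fun ω => expUtility (v ω)) P := by
  refine Integrable.mono' (integrable_const 1)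
    (continuous_expUtility.measurable.comp_aemeasurable hv.1).aestronglyMeasurable ?_
  filter_upwards [hv.2] with ω hω
  rw [Real.norm_eq_abs, abs_of_nonneg (expUtility_nonneg hω)]
  exact expUtility_le_one _

theorem expectedExpUtility_nonneg {v : Ω → ℝ} (hv : v ∈ L0plus P) :
    0 ≤ expectedExpUtility P v :=
  integral_nonneg_of_ae (by filter_upwards [hv.2] with ω hω using expUtility_nonneg hω)

theorem expectedExpUtility_le_measureReal_univ [IsFiniteMeasure P] {v : Ω → ℝ}
    (hv : v ∈ L0plus P) : expectedExpUtility P v ≤ P.real univ :=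
  calc expectedExpUtility P v ≤ ∫ _, (1 : ℝ) ∂P :=
        integral_mono (integrable_expUtility_comp hv) (integrable_const 1)
          fun _ => expUtility_le_one _
    _ = P.real univ := by simp

theorem midpoint_mem_L0plus {f g : Ω → ℝ} (hf : f ∈ L0plus P) (hg : g ∈ L0plus P) :
    (fun ω => (f ω + g ω) / 2) ∈ L0plus P :=
  ⟨(hf.1.add hg.1).div_const 2, by
    filter_upwards [hf.2, hg.2] with ω hfω hgω
    exact div_nonneg (add_nonneg hfω hgω) zero_le_two⟩

theorem exists_expectedExpUtility_midpoint_gap [IsFiniteMeasure P] {ε : ℝ} (hε : 0 < ε)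
    (M : ℝ) : ∃ δ > 0, ∀ f ∈ L0plus P, ∀ g ∈ L0plus P,
      δ * P.real {ω | ε ≤ |f ω - g ω| ∧ f ω ≤ M ∧ g ω ≤ M} ≤
        expectedExpUtility P (fun ω => (f ω + g ω) / 2) -
          (expectedExpUtility P f + expectedExpUtility P g) / 2 := by
  obtain ⟨δ, hδ, hgap⟩ := exists_expUtility_midpoint_gap hε M
  refine ⟨δ, hδ, fun f hf g hg => ?_⟩
  set w : Ω → ℝ := fun ω =>
    expUtility ((f ω + g ω) / 2) - (expUtility (f ω) + expUtility (g ω)) / 2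
  have hfg : Integrable (fun ω => expUtility (f ω) + expUtility (g ω)) P :=
    (integrable_expUtility_comp hf).add (integrable_expUtility_comp hg)
  have hw_int : Integrable w P :=
    (integrable_expUtility_comp (midpoint_mem_L0plus hf hg)).sub (hfg.div_const 2)
  have hw0 : 0 ≤ᵐ[P] w :=
    ae_of_all _ fun _ => sub_nonneg.mpr (expUtility_average_le_midpoint _ _)
  calc δ * P.real {ω | ε ≤ |f ω - g ω| ∧ f ω ≤ M ∧ g ω ≤ M}
      ≤ δ * P.real {ω | δ ≤ w ω} := by
        refine mul_le_mul_of_nonneg_left (measureReal_mono fun ω hω => ?_) hδ.le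
        exact hgap _ _ hω.2.1 hω.2.2 hω.1
    _ ≤ ∫ ω, w ω ∂P := mul_meas_ge_le_integral_of_nonneg hw0 hw_int δ
    _ = _ := by
        simp only [w, expectedExpUtility]
        rw [integral_sub (integrable_expUtility_comp (midpoint_mem_L0plus hf hg))
          (hfg.div_const 2), integral_div, integral_add (integrable_expUtility_comp hf)
          (integrable_expUtility_comp hg)]

end ExpectedUtility

theorem exists_seq_mem_forall_le_add {α : Type*} {T : ℕ → Set α} (hT : Antitone T)
    (hne : ∀ n, (T n).Nonempty) {U : α → ℝ} (hUa : BddAbove (U '' T 0))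
    (hUb : BddBelow (U '' T 0)) :
    ∃ k : ℕ → α, (∀ n, k n ∈ T n) ∧ ∀ η > 0, ∃ N, ∀ m ≥ N, ∀ v ∈ T N, U v ≤ U (k m) + η := by
  set a : ℕ → ℝ := fun n => sSup (U '' T n)
  have hbdd : ∀ n, BddAbove (U '' T n) := fun n => hUa.mono (image_mono (hT (Nat.zero_le n)))
  have hle : ∀ n, ∀ v ∈ T n, U v ≤ a n := fun n v hv => le_csSup (hbdd n) (mem_image_of_mem U hv)
  have ha : Antitone a := fun m n h =>
    csSup_le_csSup (hbdd m) ((hne n).image U) (image_mono (hT h))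
  have ha_bdd : BddBelow (range a) := by
    obtain ⟨b, hb⟩ := hUb
    refine ⟨b, ?_⟩
    rintro _ ⟨n, rfl⟩
    obtain ⟨v, hv⟩ := hne n
    exact (hb (mem_image_of_mem U (hT (Nat.zero_le n) hv))).trans (hle n v hv)
  have hsel : ∀ n : ℕ, ∃ v ∈ T n, a n - 1 / ((n : ℝ) + 1) < U v := fun n => by
    obtain ⟨_, ⟨v, hv, rfl⟩, hlt⟩ :=
      exists_lt_of_lt_csSup ((hne n).image U) (sub_lt_self (a n) Nat.one_div_pos_of_nat)
    exact ⟨v, hv, hlt⟩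
  choose k hkT hk using hsel
  refine ⟨k, hkT, fun η hη => ?_⟩
  obtain ⟨N, hN⟩ := eventually_atTop.mp
    (((tendsto_atTop_ciInf ha ha_bdd).eventually (gt_mem_nhds (lt_add_of_pos_right _
      (half_pos hη)))).and
      (tendsto_one_div_add_atTop_nhds_zero_nat.eventually (gt_mem_nhds (half_pos hη))))
  refine ⟨N, fun m hm v hv => ?_⟩
  linarith [hle N v hv, (hN N le_rfl).1, ciInf_le ha_bdd m, hk m, (hN m hm).2]

theorem BoundedInProb.exists_forall_measure_lt_le {P : Measure Ω} {A : Set (Ω → ℝ)}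
    (hA : BoundedInProb P A) {r : ℝ≥0∞} (hr : 0 < r) :
    ∃ M : ℝ, ∀ f ∈ A, P {ω | M < f ω} ≤ r := by
  obtain ⟨M, hM⟩ := (hA.eventually (gt_mem_nhds hr)).exists
  exact ⟨M, fun f hf => (le_iSup₂ (f := fun f (_ : f ∈ A) => P {ω | M < f ω}) f hf).trans hM.le⟩

def CauchyInMeasure {E : Type*} [Dist E] (P : Measure Ω) (k : ℕ → Ω → E) : Prop :=
  ∀ ε > 0, ∃ N, ∀ m ≥ N, ∀ l ≥ N, P {ω | ε ≤ dist (k m ω) (k l ω)} ≤ ENNReal.ofReal ε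

/-- Midpoints of near-maximisers lie in the same convex sets, so the concavity gap of
`expectedExpUtility` between near-maximisers is small. -/
theorem cauchyInMeasure_of_forall_le_add {P : Measure Ω} [IsFiniteMeasure P]
    {K : Set (Ω → ℝ)} (hK : K ⊆ L0plus P) (hbdd : BoundedInProb P K)
    {T : ℕ → Set (Ω → ℝ)} (hT : Antitone T) (hTconv : ∀ n, Convex ℝ (T n))
    (hTK : ∀ n, T n ⊆ K) {k : ℕ → Ω → ℝ} (hkT : ∀ n, k n ∈ T n)
    (hk : ∀ η > 0, ∃ N, ∀ m ≥ N, ∀ v ∈ T N,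
      expectedExpUtility P v ≤ expectedExpUtility P (k m) + η) :
    CauchyInMeasure P k := by
  intro ε hε
  obtain ⟨M, hM⟩ :=
    hbdd.exists_forall_measure_lt_le (ENNReal.ofReal_pos.mpr (by positivity : 0 < ε / 3))
  obtain ⟨δ, hδ, hgap⟩ := exists_expectedExpUtility_midpoint_gap (P := P) hε M
  obtain ⟨N, hN⟩ := hk (δ * (ε / 3)) (by positivity)
  refine ⟨N, fun m hm l hl => ?_⟩
  have hkK : ∀ n, k n ∈ K := fun n => hTK n (hkT n)
  have hmid : (fun ω => (k m ω + k l ω) / 2) ∈ T N := by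
    convert hTconv N (hT hm (hkT m)) (hT hl (hkT l)) (by norm_num : (0 : ℝ) ≤ 1 / 2)
      (by norm_num : (0 : ℝ) ≤ 1 / 2) (by norm_num) using 1
    funext ω
    simp only [Pi.add_apply, Pi.smul_apply, smul_eq_mul]
    ring
  have hgap_ml := hgap _ (hK (hkK m)) _ (hK (hkK l))
  set E := {ω | ε ≤ |k m ω - k l ω| ∧ k m ω ≤ M ∧ k l ω ≤ M}
  have hE : P E ≤ ENNReal.ofReal (ε / 3) := by
    refine (ENNReal.le_ofReal_iff_toReal_le (measure_ne_top _ _) (by positivity)).mpr ?_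
    rw [← measureReal_def]
    refine le_of_mul_le_mul_left ?_ hδ
    linarith [hN m hm _ hmid, hN l hl _ hmid]
  have hcover : {ω | ε ≤ dist (k m ω) (k l ω)} ⊆ E ∪ {ω | M < k m ω} ∪ {ω | M < k l ω} := by
    intro ω hω
    by_contra hout
    simp only [mem_union, mem_ofPred_eq, not_or, not_lt] at hout
    exact hout.1.1 ⟨hω, hout.1.2, hout.2⟩
  calc P {ω | ε ≤ dist (k m ω) (k l ω)}
      ≤ P E + P {ω | M < k m ω} + P {ω | M < k l ω} :=
        (measure_mono hcover).trans ((measure_union_le _ _).trans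
          (add_le_add_left (measure_union_le _ _) _))
    _ ≤ ENNReal.ofReal (ε / 3) + ENNReal.ofReal (ε / 3) + ENNReal.ofReal (ε / 3) :=
        add_le_add (add_le_add hE (hM _ (hkK m))) (hM _ (hkK l))
    _ = ENNReal.ofReal ε := by
        rw [← ENNReal.ofReal_add (by positivity) (by positivity),
          ← ENNReal.ofReal_add (by positivity) (by positivity)]
        ring_nf

theorem cauchySeq_of_eventually_dist_le_geometric_half {E : Type*} [PseudoMetricSpace E]
    {u : ℕ → E} (h : ∀ᶠ j in atTop, dist (u j) (u (j + 1)) ≤ (1 / 2 : ℝ) ^ j) :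
    CauchySeq u := by
  obtain ⟨J, hJ⟩ := eventually_atTop.mp h
  refine (cauchySeq_shift J).mp
    (cauchySeq_of_le_geometric (1 / 2) ((1 / 2) ^ J) (by norm_num) fun j => ?_)
  calc dist (u (j + J)) (u (j + 1 + J)) = dist (u (j + J)) (u (j + J + 1)) := by
        rw [add_right_comm]
    _ ≤ (1 / 2) ^ (j + J) := hJ _ (Nat.le_add_left J j)
    _ = (1 / 2) ^ J * (1 / 2) ^ j := by rw [pow_add, mul_comm]

theorem CauchyInMeasure.exists_subseq_tendsto_ae {P : Measure Ω} {E : Type*}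
    [MetricSpace E] [CompleteSpace E] [Nonempty E] [MeasurableSpace E] [BorelSpace E]
    {k : ℕ → Ω → E} (hcauchy : CauchyInMeasure P k) (hk : ∀ n, AEMeasurable (k n) P) :
    ∃ ns : ℕ → ℕ, StrictMono ns ∧ ∃ h : Ω → E, AEMeasurable h P ∧
      ∀ᵐ ω ∂P, Tendsto (fun j => k (ns j) ω) atTop (𝓝 (h ω)) := by
  obtain ⟨ns, hns, hN⟩ := extraction_forall_of_eventually'
    (P := fun j N => ∀ m ≥ N, ∀ l ≥ N,
      P {ω | (1 / 2 : ℝ) ^ j ≤ dist (k m ω) (k l ω)} ≤ ENNReal.ofReal ((1 / 2) ^ j))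
    fun j => by
      obtain ⟨N, hN⟩ := hcauchy ((1 / 2) ^ j) (by positivity)
      exact ⟨N, fun N' hN' m hm l hl => hN m (hN'.trans hm) l (hN'.trans hl)⟩
  have hsum : ∑' j, P {ω | (1 / 2 : ℝ) ^ j ≤ dist (k (ns j) ω) (k (ns (j + 1)) ω)} ≠ ∞ := by
    refine ne_top_of_le_ne_top ?_
      (ENNReal.tsum_le_tsum fun j => hN j _ le_rfl _ (hns.monotone j.le_succ))
    rw [← ENNReal.ofReal_tsum_of_nonneg (fun j => by positivity) summable_geometric_two]
    exact ENNReal.ofReal_ne_top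
  have hae : ∀ᵐ ω ∂P,
      Tendsto (fun j => k (ns j) ω) atTop (𝓝 (limUnder atTop fun j => k (ns j) ω)) := by
    filter_upwards [ae_eventually_notMem hsum] with ω hω
    refine tendsto_nhds_limUnder (cauchySeq_tendsto_of_complete ?_)
    exact cauchySeq_of_eventually_dist_le_geometric_half (hω.mono fun j hj => (not_le.mp hj).le)
  exact ⟨ns, hns, _, aemeasurable_of_tendsto_metrizable_ae atTop (fun j => hk (ns j)) hae, hae⟩

/-- Delbaen–Schachermayer, Lemma A1.1. -/
theorem exists_tendsto_ae_of_mem_convexHull_tail {P : Measure Ω} [IsFiniteMeasure P]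
    {K : Set (Ω → ℝ)} (hK : K ⊆ L0plus P) (hconv : Convex ℝ K) (hbdd : BoundedInProb P K)
    {x : ℕ → Ω → ℝ} (hx : ∀ n, x n ∈ K) :
    ∃ (k : ℕ → Ω → ℝ) (h : Ω → ℝ), (∀ j, k j ∈ convexHull ℝ (x '' Ici j)) ∧
      AEMeasurable h P ∧ ∀ᵐ ω ∂P, Tendsto (fun j => k j ω) atTop (𝓝 (h ω)) := by
  set T : ℕ → Set (Ω → ℝ) := fun n => convexHull ℝ (x '' Ici n)
  have hT : Antitone T := fun m n h => convexHull_mono (image_mono (Ici_subset_Ici.mpr h))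
  have hTK : ∀ n, T n ⊆ K := fun n =>
    convexHull_min (by rintro _ ⟨i, -, rfl⟩; exact hx i) hconv
  have hne : ∀ n, (T n).Nonempty := fun n =>
    ⟨x n, subset_convexHull ℝ _ (mem_image_of_mem x (mem_Ici.mpr le_rfl))⟩
  have hUa : BddAbove (expectedExpUtility P '' T 0) := ⟨P.real univ, by
    rintro _ ⟨v, hv, rfl⟩; exact expectedExpUtility_le_measureReal_univ (hK (hTK 0 hv))⟩
  have hUb : BddBelow (expectedExpUtility P '' T 0) := ⟨0, by
    rintro _ ⟨v, hv, rfl⟩; exact expectedExpUtility_nonneg (hK (hTK 0 hv))⟩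
  obtain ⟨k, hkT, hk⟩ := exists_seq_mem_forall_le_add hT hne hUa hUb
  obtain ⟨ns, hns, h, hh, hkh⟩ := (cauchyInMeasure_of_forall_le_add hK hbdd hT
    (fun n => convex_convexHull ℝ _) hTK hkT hk).exists_subseq_tendsto_ae
      fun n => (hK (hTK n (hkT n))).1
  exact ⟨fun j => k (ns j), h, fun j => hT (hns.id_le j) (hkT (ns j)), hh, hkh⟩

section SolidHull

variable {P : Measure Ω} {K : Set (Ω → ℝ)}

theorem convex_solidHull (hconv : Convex ℝ K) : Convex ℝ (SolidHull P K) := by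
  rintro f ⟨⟨hfm, hf0⟩, hf, hfK, hfle⟩ g ⟨⟨hgm, hg0⟩, hg, hgK, hgle⟩ s t hs ht hst
  refine ⟨⟨(hfm.const_smul s).add (hgm.const_smul t), ?_⟩, s • hf + t • hg,
    hconv hfK hgK hs ht hst, ?_⟩
  · filter_upwards [hf0, hg0] with ω hfω hgω
    simp only [Pi.add_apply, Pi.smul_apply, smul_eq_mul, Pi.zero_apply] at hfω hgω ⊢
    positivity
  · filter_upwards [hfle, hgle] with ω hfω hgω
    simp only [Pi.add_apply, Pi.smul_apply, smul_eq_mul]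
    gcongr

theorem boundedInProb_solidHull (hbdd : BoundedInProb P K) :
    BoundedInProb P (SolidHull P K) := by
  refine tendsto_of_tendsto_of_tendsto_of_le_of_le tendsto_const_nhds hbdd (fun _ => zero_le)
    fun ℓ => iSup₂_le ?_
  rintro f ⟨-, h, hhK, hfh⟩
  refine le_trans (measure_mono_ae ?_) (le_iSup₂ (f := fun f (_ : f ∈ K) => P {ω | ℓ < f ω}) h hhK)
  filter_upwards [hfh] with ω hω hℓ
  exact hℓ.trans_le hω

theorem closedInProb_solidHull [IsFiniteMeasure P] (hK : K ⊆ L0plus P) (hconv : Convex ℝ K)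
    (hclosed : ClosedInProb P K) (hbdd : BoundedInProb P K) :
    ClosedInProb P (SolidHull P K) := by
  intro f g hf hg hfg
  choose x hxK hfx using fun n => (hf n).2
  obtain ⟨ns, -, hfg_ae⟩ := hfg.exists_seq_tendsto_ae
  obtain ⟨k, h, hk, hh, hkh⟩ :=
    exists_tendsto_ae_of_mem_convexHull_tail hK hconv hbdd fun n => hxK (ns n)
  have hkK : ∀ j, k j ∈ K := fun j =>
    convexHull_min (by rintro _ ⟨n, -, rfl⟩; exact hxK (ns n)) hconv (hk j)
  have hhK : h ∈ K := hclosed k h hkK hh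
    (tendstoInMeasure_of_tendsto_ae (fun j => (hK (hkK j)).1.aestronglyMeasurable) hkh)
  choose φ hφ hφk using fun j => exists_mem_convexHull_ae_le (fun n => hfx (ns n)) (hk j)
  have hφg : ∀ᵐ ω ∂P, Tendsto (fun j => φ j ω) atTop (𝓝 (g ω)) := by
    filter_upwards [hfg_ae] with ω hω
    exact tendsto_of_mem_convexHull_tail hω fun j => apply_mem_convexHull_image (hφ j) ω
  have hg0 : 0 ≤ᵐ[P] g := by
    filter_upwards [hfg_ae, ae_all_iff.mpr fun n => (hf (ns n)).1.2] with ω hω hf0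
    exact ge_of_tendsto' hω hf0
  have hgh : g ≤ᵐ[P] h := by
    filter_upwards [hφg, hkh, ae_all_iff.mpr hφk] with ω hφω hkω hφkω
    exact le_of_tendsto_of_tendsto' hφω hkω hφkω
  exact ⟨⟨hg, hg0⟩, h, hhK, hgh⟩

end SolidHull

/-- the solid hull of a convex, closed, bounded `K ⊆ L⁰₊` is convex,
bounded and closed in probability. -/
theorem solidHull_convex_bounded_closed
    (P : Measure Ω) [IsProbabilityMeasure P]
    (K : Set (Ω → ℝ)) (hK : K ⊆ L0plus P) (hconv : Convex ℝ K)
    (hclosed : ClosedInProb P K) (hbdd : BoundedInProb P K) :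
    Convex ℝ (SolidHull P K) ∧ BoundedInProb P (SolidHull P K) ∧
      ClosedInProb P (SolidHull P K) :=
  ⟨convex_solidHull hconv, boundedInProb_solidHull hbdd,
    closedInProb_solidHull hK hconv hclosed hbdd⟩

end
end

section
/- Let L ⊆ L∞₊ := L⁰₊ ∩ L∞ be convex and solid (0 ≤ f ≤ h a.s. with h ∈ L implies f ∈ L) with 1 ∈ L, and define J := ⋃_{α ≥ 0} { α(f − 1) : f ∈ L }. Then J = J − L∞₊, i.e., for every φ ∈ J and h ∈ L∞₊, φ − h ∈ J. -/
open MeasureTheory Filter Set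

noncomputable section

variable {Ω : Type*} [MeasurableSpace Ω]

/- If `φ = α (f - 1)` and `0 ≤ h ≤ c`, then for `β = α + c + 1` the function
`g = 1 + (φ - h) / β` satisfies `φ - h = β (g - 1)` and `0 ≤ g ≤ 1 + (α / β) (f - 1)`;
the upper bound lies in `L` by convexity, so `g ∈ L` by solidity. -/

lemma one_add_div_mem_Icc {α c x y : ℝ} (hα : 0 ≤ α) (hx : 0 ≤ x) (hy₀ : 0 ≤ y) (hyc : y ≤ c) :
    1 + (α * (x - 1) - y) / (α + c + 1) ∈ Icc 0 (1 + α / (α + c + 1) * (x - 1)) := by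
  have hβ : 0 < α + c + 1 := by linarith
  constructor
  · have : -1 ≤ (α * (x - 1) - y) / (α + c + 1) := by
      rw [le_div_iff₀ hβ]
      nlinarith
    linarith
  · rw [div_mul_eq_mul_div]
    gcongr
    linarith

lemma exists_nonneg_ae_mem_Icc_of_mem_LinfPlus {P : Measure Ω} {h : Ω → ℝ}
    (hh : h ∈ LinfPlus P) : ∃ c, 0 ≤ c ∧ ∀ᵐ ω ∂P, h ω ∈ Icc 0 c := by
  obtain ⟨⟨-, hnonneg⟩, -, c, hc⟩ := hh
  refine ⟨max c 0, le_max_right c 0, ?_⟩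
  filter_upwards [hnonneg, hc] with ω h₀ hle
  exact ⟨h₀, (le_abs_self _).trans (hle.trans (le_max_left c 0))⟩

theorem Jset_sub_LinfPlus_subset_general
    (P : Measure Ω)
    (L : Set (Ω → ℝ)) (hL : L ⊆ LinfPlus P) (hconv : Convex ℝ L)
    (hsolid : IsSolid P L) (h1 : (fun _ => (1 : ℝ)) ∈ L) :
    ∀ φ ∈ Jset L, ∀ h ∈ LinfPlus P, φ - h ∈ Jset L := by
  intro φ hφ h hh
  obtain ⟨α, hα, f, hf, rfl⟩ : ∃ α, 0 ≤ α ∧ ∃ f ∈ L, (fun ω => α * (f ω - 1)) = φ := by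
    simpa [Jset, Aset] using hφ
  obtain ⟨⟨hf_meas, hf_nonneg⟩, -⟩ := hL hf
  have hh_meas : AEMeasurable h P := hh.1.1
  obtain ⟨c, hc, hhc⟩ := exists_nonneg_ae_mem_Icc_of_mem_LinfPlus hh
  have hβ : 0 < α + c + 1 := by linarith
  set g : Ω → ℝ := fun ω => 1 + (α * (f ω - 1) - h ω) / (α + c + 1)
  have ht : α / (α + c + 1) ∈ Icc (0 : ℝ) 1 :=
    ⟨div_nonneg hα hβ.le, (div_le_one hβ).2 (by linarith)⟩
  have hg : g ∈ L := by
    refine hsolid g (by fun_prop) ?_ ⟨_, hconv.add_smul_sub_mem h1 hf ht, ?_⟩ <;>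
      filter_upwards [hf_nonneg, hhc] with ω hfω hhω
    · exact (one_add_div_mem_Icc hα hfω hhω.1 hhω.2).1
    · exact (one_add_div_mem_Icc hα hfω hhω.1 hhω.2).2
  refine mem_biUnion (mem_Ici.2 hβ.le) ⟨g, hg, ?_⟩
  funext ω
  simp only [g, Pi.sub_apply]
  field_simp
  ring

/-- if `L ⊆ L∞₊` is convex and solid with `1 ∈ L`, then `J = J − L∞₊`,
i.e. `φ − h ∈ J` for every `φ ∈ J` and `h ∈ L∞₊`. -/
theorem Jset_sub_LinfPlus_subset
    (P : Measure Ω) [IsProbabilityMeasure P]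
    (L : Set (Ω → ℝ)) (hL : L ⊆ LinfPlus P) (hconv : Convex ℝ L)
    (hsolid : IsSolid P L) (h1 : (fun _ => (1 : ℝ)) ∈ L) :
    ∀ φ ∈ Jset L, ∀ h ∈ LinfPlus P, φ - h ∈ Jset L :=
  Jset_sub_LinfPlus_subset_general P L hL hconv hsolid h1

end
end

section
/- Let L ⊆ L∞₊ := L⁰₊ ∩ L∞ be convex with 1 ∈ L and such that f ∈ L, δ ≥ 0, (1+δ)f − δ ∈ L⁰₊ imply (1+δ)f − δ ∈ L. For α ≥ 0 set A_α := { α(f − 1) : f ∈ L } and J := ⋃_{α ≥ 0} A_α. If ψ ∈ J satisfies ψ ≥ −1 a.s., then ψ ∈ A_1. -/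
/-!
Write `ψ = α (f - 1)` with `f ∈ L`; then `ψ ∈ A_1` amounts to `ψ + 1 = α f + (1 - α) ∈ L`.
For `α ≤ 1` this is a convex combination of `f` and `1`; for `α ≥ 1` it is `(1 + δ) f - δ`
with `δ = α - 1`, which lies in `L` by the extension property because `ψ + 1 ≥ 0` a.s.
-/

open MeasureTheory Filter Set

noncomputable section

variable {Ω : Type*} [MeasurableSpace Ω]

theorem mem_Aset_one_of_add_one_mem {X : Type*} {L : Set (X → ℝ)} {ψ : X → ℝ}
    (h : (fun ω => ψ ω + 1) ∈ L) : ψ ∈ Aset L 1 :=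
  ⟨_, h, funext fun ω => by ring⟩

theorem Convex.mul_sub_one_add_one_mem {X : Type*} {L : Set (X → ℝ)} (hconv : Convex ℝ L)
    (h1 : (fun _ => (1 : ℝ)) ∈ L) {f : X → ℝ} (hf : f ∈ L) {α : ℝ} (hα₀ : 0 ≤ α)
    (hα₁ : α ≤ 1) : (fun ω => α * (f ω - 1) + 1) ∈ L := by
  convert hconv hf h1 hα₀ (sub_nonneg.2 hα₁) (add_sub_cancel α 1) using 1
  funext ω
  simp only [Pi.add_apply, Pi.smul_apply, smul_eq_mul]
  ring

theorem mul_sub_one_add_one_mem_of_one_le {P : Measure Ω} {L : Set (Ω → ℝ)}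
    (hcs3 : ∀ f ∈ L, ∀ δ : ℝ, 0 ≤ δ →
      (fun ω => (1 + δ) * f ω - δ) ∈ L0plus P → (fun ω => (1 + δ) * f ω - δ) ∈ L)
    {f : Ω → ℝ} (hf : f ∈ L) (hf_meas : AEMeasurable f P) {α : ℝ} (hα : 1 ≤ α)
    (hnonneg : ∀ᵐ ω ∂P, 0 ≤ α * (f ω - 1) + 1) : (fun ω => α * (f ω - 1) + 1) ∈ L := by
  have hform : (fun ω => (1 + (α - 1)) * f ω - (α - 1)) = fun ω => α * (f ω - 1) + 1 := by
    funext ω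
    ring
  have hext := hcs3 f hf (α - 1) (sub_nonneg.2 hα)
  rw [hform] at hext
  exact hext ⟨(aemeasurable_const.mul (hf_meas.sub aemeasurable_const)).add aemeasurable_const,
    hnonneg⟩

theorem mem_Aset_one_of_ge_neg_one_general
    (P : Measure Ω)
    (L : Set (Ω → ℝ)) (hL : L ⊆ LinfPlus P) (hconv : Convex ℝ L)
    (h1 : (fun _ => (1 : ℝ)) ∈ L)
    (hcs3 : ∀ f ∈ L, ∀ δ : ℝ, 0 ≤ δ →
      (fun ω => (1 + δ) * f ω - δ) ∈ L0plus P → (fun ω => (1 + δ) * f ω - δ) ∈ L) :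
    ∀ ψ ∈ Jset L, (∀ᵐ ω ∂P, -1 ≤ ψ ω) → ψ ∈ Aset L 1 := by
  rintro ψ hψ hge
  obtain ⟨α, hα₀, f, hf, rfl⟩ : ∃ α, 0 ≤ α ∧ ψ ∈ Aset L α := by simpa [Jset] using hψ
  apply mem_Aset_one_of_add_one_mem
  rcases le_total α 1 with hα₁ | hα₁
  · exact hconv.mul_sub_one_add_one_mem h1 hf hα₀ hα₁
  · refine mul_sub_one_add_one_mem_of_one_le hcs3 hf (hL hf).1.1 hα₁ ?_
    filter_upwards [hge] with ω hω
    linarith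

/-- if `L ⊆ L∞₊` is convex with `1 ∈ L` and closed under the operations
`f ↦ (1+δ)f − δ` (whenever the outcome is in `L⁰₊`), then any `ψ ∈ J` with `ψ ≥ −1` a.s.
belongs to `A_1`. -/
theorem mem_Aset_one_of_ge_neg_one
    (P : Measure Ω) [IsProbabilityMeasure P]
    (L : Set (Ω → ℝ)) (hL : L ⊆ LinfPlus P) (hconv : Convex ℝ L)
    (h1 : (fun _ => (1 : ℝ)) ∈ L)
    (hcs3 : ∀ f ∈ L, ∀ δ : ℝ, 0 ≤ δ →
      (fun ω => (1 + δ) * f ω - δ) ∈ L0plus P → (fun ω => (1 + δ) * f ω - δ) ∈ L) :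
    ∀ ψ ∈ Jset L, (∀ᵐ ω ∂P, -1 ≤ ψ ω) → ψ ∈ Aset L 1 :=
  mem_Aset_one_of_ge_neg_one_general P L hL hconv h1 hcs3

end
end
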